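/- arXiv:2511.13531 — 5 statements merged into one kernel-verified Lean document; each statement's English description precedes it below -/
import Mathlib

section
/- Let G be a finite simple graph on a vertex type V, let d ≥ 1, and let S be a realization of G in dimension d. Then: (i) for every independent set I of G there exists a unit vector ψ ∈ ℂ^d such that (ψᴴ (S i) ψ)² = 1 for every i ∈ I; and consequently (ii) for every weight function w : V → ℝ with w i ≥ 0 for all i, the weighted independence number satisfies α(G,w) ≤ β_S(w). -/
open Matrix

/-- A realization of the graph `G` in dimension `d`: a family of Hermitian involutions that
anticommute on edges and commute on non-edges. -/
def IsRealization {V : Type*} (G : SimpleGraph V) (d : ℕ)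
    (S : V → Matrix (Fin d) (Fin d) ℂ) : Prop :=
  (∀ i, (S i).IsHermitian) ∧ (∀ i, S i * S i = 1) ∧
    (∀ i j, G.Adj i j → S i * S j = -(S j * S i)) ∧
    (∀ i j, i ≠ j → ¬G.Adj i j → S i * S j = S j * S i)

/-- The (real) expectation value `ψᴴ A ψ` of a matrix `A` at a vector `ψ`. -/
noncomputable def expectation {d : ℕ} (A : Matrix (Fin d) (Fin d) ℂ) (ψ : Fin d → ℂ) : ℝ :=
  (star ψ ⬝ᵥ (A *ᵥ ψ)).re

/-- The beta value of a realization: supremum over unit vectors of the weighted sum of squared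
expectations. -/
noncomputable def betaVal {V : Type*} [Fintype V] {d : ℕ}
    (S : V → Matrix (Fin d) (Fin d) ℂ) (w : V → ℝ) : ℝ :=
  sSup {r : ℝ | ∃ ψ : Fin d → ℂ, star ψ ⬝ᵥ ψ = 1 ∧
    r = ∑ i, w i * (expectation (S i) ψ) ^ 2}

/-- A finite set of vertices is independent if no two of its members are adjacent. -/
def IsIndepSet {V : Type*} (G : SimpleGraph V) (I : Finset V) : Prop :=
  ∀ a ∈ I, ∀ b ∈ I, ¬G.Adj a b

/-- The weighted independence number. -/
noncomputable def alphaW {V : Type*} [Fintype V] (G : SimpleGraph V) (w : V → ℝ) : ℝ :=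
  sSup {r : ℝ | ∃ I : Finset V, IsIndepSet G I ∧ r = ∑ i ∈ I, w i}

/-- A graph is ħ-perfect if for every realization and every nonnegative weight vector the beta
value equals the weighted independence number. -/
def HbarPerfect {V : Type*} [Fintype V] (G : SimpleGraph V) : Prop :=
  ∀ d : ℕ, 1 ≤ d → ∀ S : V → Matrix (Fin d) (Fin d) ℂ, IsRealization G d S →
    ∀ w : V → ℝ, (∀ i, 0 ≤ w i) → betaVal S w = alphaW G w


lemma dot_star_self {d : ℕ} (v : Fin d → ℂ) :
    star v ⬝ᵥ v = ((∑ i, Complex.normSq (v i) : ℝ) : ℂ) := by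
  push_cast
  simp [dotProduct, Complex.normSq_eq_conj_mul_self]

/-- The expectation at a unit vector of a Hermitian involution squares to at most 1. -/
lemma exp_sq_le_one' {d : ℕ} {A : Matrix (Fin d) (Fin d) ℂ} (hA : A.IsHermitian)
    (hsq : A * A = 1) {ψ : Fin d → ℂ} (hψ : star ψ ⬝ᵥ ψ = 1) :
    ((star ψ ⬝ᵥ (A *ᵥ ψ)).re) ^ 2 ≤ 1 := by
  set v := A *ᵥ ψ with hv
  set a := star ψ ⬝ᵥ v with ha
  have h1 : star v ⬝ᵥ v = 1 := by
    calc star v ⬝ᵥ v = (star ψ ᵥ* Aᴴ) ⬝ᵥ v := by rw [hv, star_mulVec]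
    _ = star ψ ⬝ᵥ (Aᴴ *ᵥ v) := (dotProduct_mulVec _ _ _).symm
    _ = star ψ ⬝ᵥ ((Aᴴ * A) *ᵥ ψ) := by rw [hv, mulVec_mulVec]
    _ = 1 := by rw [hA.eq, hsq, one_mulVec, hψ]
  have h2 : star v ⬝ᵥ ψ = star a := by
    rw [star_dotProduct]
  have h3 : star (v - a • ψ) ⬝ᵥ (v - a • ψ) = 1 - (Complex.normSq a : ℂ) := by
    have expand : star (v - a • ψ) ⬝ᵥ (v - a • ψ)
        = star v ⬝ᵥ v - a * (star v ⬝ᵥ ψ) - star a * (star ψ ⬝ᵥ v)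
          + star a * a * (star ψ ⬝ᵥ ψ) := by
      simp only [star_sub, star_smul, sub_dotProduct, dotProduct_sub, smul_dotProduct,
        dotProduct_smul, smul_eq_mul]
      ring
    rw [expand, h1, h2, hψ, ← ha]
    have : a * star a = (Complex.normSq a : ℂ) := by
      simpa using Complex.mul_conj a
    rw [mul_one]
    rw [show star a * a = a * star a from mul_comm _ _, this]
    ring
  have hre : 0 ≤ (star (v - a • ψ) ⬝ᵥ (v - a • ψ)).re := by
    rw [dot_star_self]
    simp only [Complex.ofReal_re]
    exact Finset.sum_nonneg fun i _ => Complex.normSq_nonneg _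
  rw [h3] at hre
  have hn : Complex.normSq a ≤ 1 := by
    simpa using hre
  have : a.re ^ 2 ≤ Complex.normSq a := by
    rw [Complex.normSq_apply]; nlinarith [sq_nonneg a.im]
  nlinarith

/-- Common eigenvector for a commuting family of involutions. -/
lemma exists_common_eigenvector {V : Type*} {d : ℕ} (hd : 1 ≤ d)
    (S : V → Matrix (Fin d) (Fin d) ℂ) (hsq : ∀ i, S i * S i = 1) :
    ∀ I : Finset V, (∀ a ∈ I, ∀ b ∈ I, a ≠ b → S a * S b = S b * S a) →
    ∃ ψ : Fin d → ℂ, ψ ≠ 0 ∧ ∀ i ∈ I, S i *ᵥ ψ = ψ ∨ S i *ᵥ ψ = -ψ := by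
  intro I
  classical
  induction I using Finset.induction_on with
  | empty =>
    intro _
    refine ⟨fun _ => 1, ?_, by simp⟩
    intro h
    have := congrFun h ⟨0, hd⟩
    simp at this
  | @insert j I hj ih =>
    intro hcomm
    obtain ⟨ψ, hψ0, hψ⟩ := ih (fun a ha b hb hab =>
      hcomm a (Finset.mem_insert_of_mem ha) b (Finset.mem_insert_of_mem hb) hab)
    by_cases hc : ψ + S j *ᵥ ψ = 0
    · refine ⟨ψ, hψ0, ?_⟩
      intro i hi
      rcases Finset.mem_insert.mp hi with rfl | hi
      · right
        have : S i *ᵥ ψ = -ψ := by linear_combination (norm := module) hc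
        exact this
      · exact hψ i hi
    · refine ⟨ψ + S j *ᵥ ψ, hc, ?_⟩
      intro i hi
      rcases Finset.mem_insert.mp hi with rfl | hi
      · left
        rw [mulVec_add, mulVec_mulVec, hsq i, one_mulVec, add_comm]
      · have hij : i ≠ j := fun h => hj (h ▸ hi)
        have hcij : S i * S j = S j * S i :=
          hcomm i (Finset.mem_insert_of_mem hi) j (Finset.mem_insert_self j I) hij
        have key : S i *ᵥ (ψ + S j *ᵥ ψ) = (S i *ᵥ ψ) + S j *ᵥ (S i *ᵥ ψ) := by
          rw [mulVec_add, mulVec_mulVec, hcij, ← mulVec_mulVec]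
        rcases hψ i hi with h | h
        · left; rw [key, h]
        · right; rw [key, h, mulVec_neg, neg_add]

/-- For a realization of a graph: (i) every independent set admits a unit vector on which all
corresponding observables have squared expectation 1; (ii) consequently the weighted independence
number is at most the beta value, for all nonnegative weights. -/
theorem stmt_0 {V : Type*} [Fintype V] (G : SimpleGraph V) (d : ℕ) (hd : 1 ≤ d)
    (S : V → Matrix (Fin d) (Fin d) ℂ) (hS : IsRealization G d S) :
    (∀ I : Finset V, IsIndepSet G I →
      ∃ ψ : Fin d → ℂ, star ψ ⬝ᵥ ψ = 1 ∧ ∀ i ∈ I, (expectation (S i) ψ) ^ 2 = 1) ∧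
    (∀ w : V → ℝ, (∀ i, 0 ≤ w i) → alphaW G w ≤ betaVal S w) := by
  obtain ⟨hHerm, hsq, hanti, hcomm⟩ := hS
  have part1 : ∀ I : Finset V, IsIndepSet G I →
      ∃ ψ : Fin d → ℂ, star ψ ⬝ᵥ ψ = 1 ∧ ∀ i ∈ I, (expectation (S i) ψ) ^ 2 = 1 := by
    intro I hI
    obtain ⟨ψ, hψ0, hψ⟩ := exists_common_eigenvector hd S hsq I
      (fun a ha b hb hab => hcomm a b hab (hI a ha b hb))
    set t := ∑ i, Complex.normSq (ψ i) with ht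
    have ht0 : 0 < t := by
      obtain ⟨i0, hi0⟩ := Function.ne_iff.mp hψ0
      have h1 : 0 < Complex.normSq (ψ i0) := by
        simpa [Complex.normSq_pos] using hi0
      have h2 : Complex.normSq (ψ i0) ≤ t :=
        Finset.single_le_sum (fun i _ => Complex.normSq_nonneg (ψ i)) (Finset.mem_univ i0)
      linarith
    set c : ℝ := (Real.sqrt t)⁻¹ with hcdef
    have hst : Real.sqrt t ≠ 0 := ne_of_gt (Real.sqrt_pos.mpr ht0)
    have hct : c ^ 2 * t = 1 := by
      rw [hcdef, inv_pow, Real.sq_sqrt ht0.le]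
      field_simp
    have hunit : star ((c : ℂ) • ψ) ⬝ᵥ ((c : ℂ) • ψ) = 1 := by
      rw [star_smul, smul_dotProduct, dotProduct_smul, dot_star_self, ← ht]
      simp only [star_trivial, RCLike.star_def, Complex.conj_ofReal, smul_eq_mul]
      rw [← Complex.ofReal_mul, ← Complex.ofReal_mul, ← Complex.ofReal_one]
      norm_cast
      rw [show c * (c * t) = c ^ 2 * t by ring, hct]
    refine ⟨(c : ℂ) • ψ, hunit, ?_⟩
    · intro i hi
      rcases hψ i hi with h | h
      · have : S i *ᵥ ((c : ℂ) • ψ) = (c : ℂ) • ψ := by rw [mulVec_smul, h]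
        unfold expectation
        rw [this, hunit]
        norm_num
      · have : S i *ᵥ ((c : ℂ) • ψ) = -((c : ℂ) • ψ) := by rw [mulVec_smul, h, smul_neg]
        unfold expectation
        rw [this, dotProduct_neg, hunit]
        norm_num
  refine ⟨part1, ?_⟩
  intro w hw
  have hBdd : BddAbove {r : ℝ | ∃ ψ : Fin d → ℂ, star ψ ⬝ᵥ ψ = 1 ∧
      r = ∑ i, w i * (expectation (S i) ψ) ^ 2} := by
    refine ⟨∑ i, w i, ?_⟩
    rintro r ⟨ψ, hψ, rfl⟩
    apply Finset.sum_le_sum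
    intro i _
    have hb := exp_sq_le_one' (hHerm i) (hsq i) hψ
    have : (expectation (S i) ψ) ^ 2 ≤ 1 := hb
    nlinarith [hw i, sq_nonneg (expectation (S i) ψ)]
  have hbeta0 : 0 ≤ betaVal S w := by
    obtain ⟨ψ, hψu, _⟩ := part1 ∅ (by intro a ha; simp at ha)
    have hmem : (∑ i, w i * (expectation (S i) ψ) ^ 2) ∈ {r : ℝ | ∃ ψ : Fin d → ℂ,
        star ψ ⬝ᵥ ψ = 1 ∧ r = ∑ i, w i * (expectation (S i) ψ) ^ 2} := ⟨ψ, hψu, rfl⟩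
    have hpos : 0 ≤ ∑ i, w i * (expectation (S i) ψ) ^ 2 :=
      Finset.sum_nonneg fun i _ => mul_nonneg (hw i) (sq_nonneg _)
    exact le_trans hpos (le_csSup hBdd hmem)
  apply Real.sSup_le _ hbeta0
  rintro r ⟨I, hI, rfl⟩
  obtain ⟨ψ, hψu, hψI⟩ := part1 I hI
  have hmem : (∑ i, w i * (expectation (S i) ψ) ^ 2) ∈ {r : ℝ | ∃ ψ : Fin d → ℂ,
      star ψ ⬝ᵥ ψ = 1 ∧ r = ∑ i, w i * (expectation (S i) ψ) ^ 2} := ⟨ψ, hψu, rfl⟩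
  have h1 : ∑ i ∈ I, w i ≤ ∑ i, w i * (expectation (S i) ψ) ^ 2 := by
    calc ∑ i ∈ I, w i = ∑ i ∈ I, w i * (expectation (S i) ψ) ^ 2 := by
          apply Finset.sum_congr rfl
          intro i hi
          rw [hψI i hi, mul_one]
    _ ≤ ∑ i, w i * (expectation (S i) ψ) ^ 2 := by
          apply Finset.sum_le_sum_of_subset_of_nonneg (Finset.subset_univ I)
          intro i _ _
          exact mul_nonneg (hw i) (sq_nonneg _)
  exact le_trans h1 (le_csSup hBdd hmem)
end

section
/- Every perfect finite simple graph is ħ-perfect; that is, if G is a finite simple graph such that every induced subgraph H of G has chromatic number equal to clique number, then for every d ≥ 1, every realization S of G in dimension d, and every nonnegative weight vector w, β_S(w) = α(G,w). -/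
open Matrix

/-!
For a clique `K`, the operators `S i` (`i ∈ K`) pairwise anticommute, so `T = ∑ i ∈ K, ⟨S i⟩ S i`
satisfies `T² = (∑ i ∈ K, ⟨S i⟩²) • 1`; Cauchy–Schwarz `⟨T⟩² ≤ ⟨T²⟩` then gives
`∑ i ∈ K, ⟨S i⟩² ≤ 1`. So `y i = ⟨S i⟩²` satisfies every clique inequality, and for a perfect graph
this forces `∑ i, w i * y i ≤ α(G, w)` (the clique-constrained stable set polytope is the stable
set polytope). For integer weights this comes from blowing each vertex up into an independent set
of copies and covering the blown-up graph, which is again perfect, by `α` cliques (the weak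
perfect graph theorem, proved through Lovász's inequality `|s| ≤ ω(s) α(s)` by Gasparyan's
linear-algebra argument); real weights follow by rounding. Conversely, the operators of an
independent set commute, so a common eigenvector has `⟨S i⟩² = 1` on a maximum-weight independent
set, and `β = α`.
-/

open Finset

theorem Finset.sum_card_inter_filter_eq {α : Type*} [DecidableEq α] {t : Finset α} {f : α → ℕ}
    {n : ℕ} (hf : ∀ v ∈ t, f v < n) (K : Finset α) :
    ∑ j : Fin n, #(K ∩ {v ∈ t | f v = j}) = #(K ∩ t) := by
  rw [card_eq_sum_card_fiberwise (f := f) (t := range n)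
    fun v hv => mem_range.2 (hf v (mem_inter.1 hv).2)]
  simp only [inter_filter]
  exact Fin.sum_univ_eq_sum_range (fun j => #{v ∈ K ∩ t | f v = j}) n

theorem Finset.sum_card_erase_add_card_inter {α : Type*} [DecidableEq α] (A K : Finset α) :
    ∑ a ∈ A, #(K.erase a) + #(A ∩ K) = #A * #K := by
  rw [← filter_mem_eq_inter, card_filter, ← sum_add_distrib]
  have hterm : ∀ a ∈ A, #(K.erase a) + (if a ∈ K then 1 else 0) = #K := by
    intro a _
    split_ifs with haK
    · exact card_erase_add_one haK
    · rw [erase_eq_of_notMem haK, add_zero]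
  rw [sum_congr rfl hterm, sum_const, smul_eq_mul]

theorem linearIndependent_of_apply_eq_ite {K M ι : Type*} [Field K] [CharZero K]
    [AddCommGroup M] [Module K M] [Fintype ι] [DecidableEq ι] (hι : Fintype.card ι ≠ 1)
    {v : ι → M} (f : ι → M →ₗ[K] K) (h : ∀ t u, f u (v t) = if t = u then 0 else 1) :
    LinearIndependent K v := by
  rw [Fintype.linearIndependent_iff]
  intro c hc
  have hcu : ∀ u, c u = ∑ t, c t := by
    intro u
    have := congrArg (f u) hc
    simp only [map_sum, map_smul, h, smul_eq_mul, mul_ite, mul_zero, mul_one, map_zero,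
      sum_ite, sum_const_zero, zero_add, filter_ne'] at this
    rw [← add_sum_erase _ _ (mem_univ u), this, add_zero]
  have htot : ∑ t, c t = 0 := by
    have hsum : ∑ t, c t = Fintype.card ι * ∑ t, c t := by
      conv_lhs => rw [sum_congr rfl fun t _ => hcu t]
      rw [sum_const, card_univ, nsmul_eq_mul]
    have hne : (Fintype.card ι : K) - 1 ≠ 0 := sub_ne_zero.2 (by exact_mod_cast hι)
    exact (mul_eq_zero.1 (by linear_combination -hsum :
      ((Fintype.card ι : K) - 1) * ∑ t, c t = 0)).resolve_left hne
  intro u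
  rw [hcu u, htot]

/-- The intersection matrix of the `K u` against the `T t` is `J - I`, which is invertible, so the
indicator vectors of the `T t` are linearly independent in `ℚ^s`. -/
theorem Finset.card_le_card_of_card_inter_eq_ite {α ι : Type*} [Fintype ι] [DecidableEq ι]
    [DecidableEq α] {s : Finset α} {T K : ι → Finset α} (hι : Fintype.card ι ≠ 1)
    (hKs : ∀ u, K u ⊆ s) (hKT : ∀ t u, #(K u ∩ T t) = if t = u then 0 else 1) :
    Fintype.card ι ≤ #s := by
  have hli : LinearIndependent ℚ fun t (v : s) => if (v : α) ∈ T t then (1 : ℚ) else 0 := by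
    refine linearIndependent_of_apply_eq_ite hι
      (fun u => ∑ v : s, (if (v : α) ∈ K u then (1 : ℚ) else 0) • LinearMap.proj v)
      fun t u => ?_
    simp only [LinearMap.sum_apply, LinearMap.smul_apply, LinearMap.coe_proj,
      Function.eval, smul_eq_mul, ite_mul, one_mul, zero_mul]
    rw [sum_coe_sort s fun v => if v ∈ K u then if v ∈ T t then (1 : ℚ) else 0 else 0]
    simp only [← ite_and, sum_boole, ← mem_inter, filter_mem_eq_inter,
      inter_eq_right.2 (inter_subset_left.trans (hKs u)), hKT]
    split_ifs <;> simp
  simpa using hli.fintype_card_le_finrank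

namespace SimpleGraph

variable {V : Type*}

open Classical in
noncomputable def cliqueNumOn (G : SimpleGraph V) (s : Finset V) : ℕ :=
  (s.powerset.filter fun K : Finset V => G.IsClique (K : Set V)).sup card

def ColorableOn (G : SimpleGraph V) (s : Finset V) (n : ℕ) : Prop :=
  ∃ c : V → ℕ, (∀ v ∈ s, c v < n) ∧ ∀ u ∈ s, ∀ v ∈ s, G.Adj u v → c u ≠ c v

/-- Perfection (`χ = ω` on every induced subgraph), stated for finite vertex sets and colourings
with values in `ℕ`. -/
def IsPerfect (G : SimpleGraph V) : Prop :=
  ∀ s : Finset V, G.ColorableOn s (G.cliqueNumOn s)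

variable {G : SimpleGraph V}

theorem IsClique.card_le_cliqueNumOn {s K : Finset V} (hKs : K ⊆ s)
    (hK : G.IsClique (K : Set V)) : #K ≤ G.cliqueNumOn s := by
  classical
  exact le_sup (f := card) (mem_filter.2 ⟨mem_powerset.2 hKs, hK⟩)

theorem exists_isClique_card_eq_cliqueNumOn (G : SimpleGraph V) (s : Finset V) :
    ∃ K ⊆ s, G.IsClique (K : Set V) ∧ #K = G.cliqueNumOn s := by
  classical
  obtain ⟨K, hK, hcard⟩ := exists_mem_eq_sup
    (s.powerset.filter fun K : Finset V => G.IsClique (K : Set V)) ⟨∅, by simp⟩ card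
  rw [mem_filter, mem_powerset] at hK
  exact ⟨K, hK.1, hK.2, hcard.symm⟩

theorem cliqueNumOn_mono {s t : Finset V} (hst : s ⊆ t) : G.cliqueNumOn s ≤ G.cliqueNumOn t := by
  obtain ⟨K, hKs, hK, hcard⟩ := G.exists_isClique_card_eq_cliqueNumOn s
  exact hcard ▸ hK.card_le_cliqueNumOn (hKs.trans hst)

theorem one_le_cliqueNumOn {s : Finset V} (hs : s.Nonempty) : 1 ≤ G.cliqueNumOn s := by
  obtain ⟨v, hv⟩ := hs
  simpa using IsClique.card_le_cliqueNumOn (G := G) (singleton_subset_iff.2 hv) (by simp)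

theorem cliqueNum_induce_le_cliqueNumOn (s : Finset V) :
    (G.induce (s : Set V)).cliqueNum ≤ G.cliqueNumOn s := by
  obtain ⟨t, ht⟩ := (G.induce (s : Set V)).exists_isNClique_cliqueNum
  rw [← ht.card_eq, ← card_map (Function.Embedding.subtype _)]
  refine IsClique.card_le_cliqueNumOn (fun v hv => ?_) fun u hu v hv huv => ?_
  · obtain ⟨⟨w, hw⟩, -, rfl⟩ := mem_map.1 hv
    exact hw
  · obtain ⟨a, ha, rfl⟩ := mem_map.1 hu
    obtain ⟨b, hb, rfl⟩ := mem_map.1 hv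
    exact ht.isClique ha hb fun h => huv (h ▸ rfl)

theorem isPerfect_of_chromaticNumber_induce_le
    (h : ∀ s : Set V, (G.induce s).chromaticNumber ≤ (G.induce s).cliqueNum) : G.IsPerfect := by
  intro s
  obtain ⟨C⟩ := chromaticNumber_le_iff_colorable.1 <|
    (h s).trans (Nat.cast_le.2 (cliqueNum_induce_le_cliqueNumOn s))
  classical
  refine ⟨fun v => if hv : v ∈ s then C ⟨v, hv⟩ else 0, fun v hv => ?_, fun u hu v hv huv => ?_⟩
  · simp only [hv, dif_pos]
    exact (C ⟨v, hv⟩).2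
  · simp only [hu, hv, dif_pos, ne_eq, Fin.val_inj]
    exact C.valid huv

theorem IsClique.card_inter_le_one [DecidableEq V] {K T : Finset V}
    (hK : G.IsClique (K : Set V)) (hT : G.IsIndepSet (T : Set V)) : #(K ∩ T) ≤ 1 := by
  refine card_le_one.2 fun a ha b hb => ?_
  rw [mem_inter] at ha hb
  by_contra hab
  exact hT ha.2 hb.2 hab (hK ha.1 hb.1 hab)

theorem ColorableOn.mono {s t : Finset V} {n m : ℕ} (h : G.ColorableOn s n) (hts : t ⊆ s)
    (hnm : n ≤ m) : G.ColorableOn t m :=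
  let ⟨c, hlt, hadj⟩ := h
  ⟨c, fun v hv => (hlt v (hts hv)).trans_le hnm,
    fun u hu v hv => hadj u (hts hu) v (hts hv)⟩

theorem ColorableOn.of_sdiff [DecidableEq V] {s T : Finset V} {n : ℕ}
    (h : G.ColorableOn (s \ T) n) (hT : G.IsIndepSet (T : Set V)) : G.ColorableOn s (n + 1) := by
  obtain ⟨c, hlt, hadj⟩ := h
  refine ⟨fun v => if v ∈ T then n else c v, fun v hv => ?_, fun u hu v hv huv => ?_⟩
  · dsimp only
    split_ifs with hvT
    · exact n.lt_succ_self
    · exact (hlt v (mem_sdiff.2 ⟨hv, hvT⟩)).trans n.lt_succ_self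
  · by_cases huT : u ∈ T <;> by_cases hvT : v ∈ T <;>
      simp only [huT, hvT, if_true, if_false]
    · exact absurd huv (hT huT hvT huv.ne)
    · exact (hlt v (mem_sdiff.2 ⟨hv, hvT⟩)).ne'
    · exact (hlt u (mem_sdiff.2 ⟨hu, huT⟩)).ne
    · exact hadj u (mem_sdiff.2 ⟨hu, huT⟩) v (mem_sdiff.2 ⟨hv, hvT⟩) huv

theorem exists_isClique_sdiff_of_minimal [DecidableEq V] {s T : Finset V}
    (hmin : ∀ t ⊂ s, G.ColorableOn t (G.cliqueNumOn t))
    (hs : ¬G.ColorableOn s (G.cliqueNumOn s)) (hTs : T ⊆ s) (hT : T.Nonempty)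
    (hTind : G.IsIndepSet (T : Set V)) :
    ∃ K ⊆ s \ T, G.IsClique (K : Set V) ∧ #K = G.cliqueNumOn s := by
  have hge : G.cliqueNumOn s ≤ G.cliqueNumOn (s \ T) := not_lt.1 fun hlt =>
    hs (((hmin _ (sdiff_ssubset hTs hT)).of_sdiff hTind).mono subset_rfl hlt)
  obtain ⟨K, hKs, hK, hKcard⟩ := G.exists_isClique_card_eq_cliqueNumOn (s \ T)
  exact ⟨K, hKs, hK, hKcard.trans (le_antisymm (cliqueNumOn_mono sdiff_subset) hge)⟩

/-- The `αω + 1` independent sets of Gasparyan's argument: a maximum independent set `A` of `s`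
and, for each `a ∈ A`, the colour classes of a colouring `F a` of `s - a`. -/
def gasparyanFamily [DecidableEq V] (s A : Finset V) {n : ℕ} (F : A → V → ℕ) :
    Option (A × Fin n) → Finset V
  | none => A
  | some (a, j) => {v ∈ s.erase a | F a v = j}

section GasparyanFamily

variable [DecidableEq V] {s A : Finset V} {n : ℕ} {F : A → V → ℕ}

theorem gasparyanFamily_subset (hAs : A ⊆ s) (t : Option (A × Fin n)) :
    gasparyanFamily s A F t ⊆ s := by
  rcases t with _ | ⟨a, j⟩
  · exact hAs
  · exact (filter_subset _ _).trans (erase_subset _ _)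

theorem isIndepSet_gasparyanFamily (hA : G.IsIndepSet (A : Set V))
    (hF : ∀ a : A, ∀ u ∈ s.erase a, ∀ v ∈ s.erase a, G.Adj u v → F a u ≠ F a v)
    (t : Option (A × Fin n)) : G.IsIndepSet (gasparyanFamily s A F t : Set V) := by
  rcases t with _ | ⟨a, j⟩
  · exact hA
  · intro u hu v hv _ huv
    simp only [gasparyanFamily, mem_coe, mem_filter] at hu hv
    exact hF a u hu.1 v hv.1 huv (hu.2.trans hv.2.symm)

theorem sum_card_inter_gasparyanFamily_some {K : Finset V} (a : A)
    (hF : ∀ v ∈ s.erase a, F a v < n) (hK : K ⊆ s) :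
    ∑ j : Fin n, #(K ∩ gasparyanFamily s A F (some (a, j))) = #(K.erase a) := by
  simp only [gasparyanFamily]
  rw [sum_card_inter_filter_eq hF K, inter_erase, inter_eq_left.2 hK]

theorem sum_card_inter_gasparyanFamily {K : Finset V} (hF : ∀ a : A, ∀ v ∈ s.erase a, F a v < n)
    (hK : K ⊆ s) (hKcard : #K = n) :
    ∑ t : Option (A × Fin n), #(K ∩ gasparyanFamily s A F t) = #A * n :=
  calc ∑ t : Option (A × Fin n), #(K ∩ gasparyanFamily s A F t)
      = #(K ∩ A) + ∑ a : A, #(K.erase a) := by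
        rw [Fintype.sum_option, Fintype.sum_prod_type]
        simp only [sum_card_inter_gasparyanFamily_some _ (hF _) hK]
        rfl
    _ = #A * n := by
        rw [sum_coe_sort A fun a => #(K.erase a), add_comm, inter_comm,
          sum_card_erase_add_card_inter, hKcard]

/-- Pigeonhole: `K` meets each of the `n` independent colour classes at most once. -/
theorem gasparyanFamily_some_nonempty {K : Finset V} {a : A} (hF : ∀ v ∈ s.erase a, F a v < n)
    (hT : ∀ j : Fin n, G.IsIndepSet (gasparyanFamily s A F (some (a, j)) : Set V))
    (hKs : K ⊆ s.erase a) (hK : G.IsClique (K : Set V)) (hKcard : #K = n) (j : Fin n) :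
    (gasparyanFamily s A F (some (a, j))).Nonempty := by
  have hsum := sum_card_inter_gasparyanFamily_some a hF (hKs.trans (erase_subset _ _))
  rw [erase_eq_of_notMem fun h => (mem_erase.1 (hKs h)).1 rfl, hKcard] at hsum
  have hall := (sum_eq_sum_iff_of_le fun j _ => hK.card_inter_le_one (hT j)).1
    (hsum.trans (by simp))
  exact (card_pos.1 (hall j (mem_univ j)).ge).mono inter_subset_right

end GasparyanFamily

/-- Gasparyan's argument: in a minimal imperfect set `s`, each member of `gasparyanFamily` is
missed by some `ω`-clique, and a counting argument shows that this clique meets every other member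
exactly once. -/
theorem mul_lt_card_of_minimal {s : Finset V}
    (hmin : ∀ t ⊂ s, G.ColorableOn t (G.cliqueNumOn t))
    (hs : ¬G.ColorableOn s (G.cliqueNumOn s)) :
    G.cliqueNumOn s * Gᶜ.cliqueNumOn s < #s := by
  classical
  set ω := G.cliqueNumOn s
  set α := Gᶜ.cliqueNumOn s
  have hsne : s.Nonempty := nonempty_iff_ne_empty.2 fun h =>
    hs ⟨fun _ => 0, by simp [h], by simp [h]⟩
  obtain ⟨A, hAs, hA, hAcard⟩ := Gᶜ.exists_isClique_card_eq_cliqueNumOn s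
  rw [isClique_compl] at hA
  have hcol : ∀ a : A, G.ColorableOn (s.erase a) ω := fun a =>
    (hmin _ (erase_ssubset (hAs a.2))).mono subset_rfl (cliqueNumOn_mono (erase_subset _ _))
  choose F hFlt hFadj using hcol
  set T := gasparyanFamily s A (n := ω) F
  have hTind := isIndepSet_gasparyanFamily (n := ω) hA hFadj
  have hTne : ∀ t, (T t).Nonempty := by
    rintro (_ | ⟨a, j⟩)
    · rw [← card_pos]
      exact hAcard ▸ one_le_cliqueNumOn hsne
    · obtain ⟨K, hKs, hK, hKcard⟩ := exists_isClique_sdiff_of_minimal hmin hs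
        (singleton_subset_iff.2 (hAs a.2)) (singleton_nonempty _) (by simp)
      rw [sdiff_singleton_eq_erase] at hKs
      exact gasparyanFamily_some_nonempty (hFlt a) (fun j => hTind _) hKs hK hKcard j
  choose K hKs hK hKcard using fun t =>
    exists_isClique_sdiff_of_minimal hmin hs (gasparyanFamily_subset hAs t) (hTne t) (hTind t)
  have hcard : Fintype.card (Option (A × Fin ω)) = α * ω + 1 := by
    rw [Fintype.card_option, Fintype.card_prod, Fintype.card_coe, Fintype.card_fin, hAcard]
  have hzero : ∀ u, #(K u ∩ T u) = 0 := fun u =>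
    card_eq_zero.2 (disjoint_iff_inter_eq_empty.1 (disjoint_of_subset_left (hKs u) sdiff_disjoint))
  have hone : ∀ t u, t ≠ u → #(K u ∩ T t) = 1 := by
    intro t u htu
    have hsum := sum_card_inter_gasparyanFamily hFlt ((hKs u).trans sdiff_subset) (hKcard u)
    rw [← add_sum_erase _ _ (mem_univ u), hzero u, zero_add] at hsum
    exact (sum_eq_sum_iff_of_le fun t _ => (hK u).card_inter_le_one (hTind t)).1
      (hsum.trans (by simp [card_erase_of_mem, hcard, hAcard, α])) t
      (mem_erase.2 ⟨htu, mem_univ t⟩)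
  have hcard_ne : α * ω + 1 ≠ 1 := by
    have := one_le_cliqueNumOn (G := G) hsne
    have := one_le_cliqueNumOn (G := Gᶜ) hsne
    simp only [ne_eq, add_eq_right, mul_eq_zero, not_or]
    omega
  have hle := card_le_card_of_card_inter_eq_ite (T := T) (hcard ▸ hcard_ne)
    (fun u => (hKs u).trans sdiff_subset) fun t u => by
      split_ifs with htu
      · exact htu ▸ hzero t
      · exact hone t u htu
  rw [hcard, mul_comm] at hle
  exact hle

/-- Lovász's characterisation of perfect graphs, through Gasparyan's proof. -/
theorem isPerfect_of_card_le_mul (h : ∀ s, #s ≤ G.cliqueNumOn s * Gᶜ.cliqueNumOn s) :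
    G.IsPerfect := by
  intro s
  induction s using Finset.strongInduction with
  | H s ih => exact by_contra fun hs => (h s).not_gt (mul_lt_card_of_minimal ih hs)

theorem IsPerfect.card_le_mul (hG : G.IsPerfect) (s : Finset V) :
    #s ≤ G.cliqueNumOn s * Gᶜ.cliqueNumOn s := by
  classical
  obtain ⟨c, hlt, hadj⟩ := hG s
  rw [card_eq_sum_card_fiberwise fun v hv => mem_range.2 (hlt v hv)]
  refine (sum_le_sum fun j _ =>
    IsClique.card_le_cliqueNumOn (G := Gᶜ) (filter_subset _ s) ?_).trans
    (by rw [sum_const, card_range, smul_eq_mul])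
  intro u hu v hv huv
  simp only [coe_filter, Set.mem_ofPred_eq] at hu hv
  exact (compl_adj G u v).2 ⟨huv, fun h => hadj u hu.1 v hv.1 h (hu.2.trans hv.2.symm)⟩

/-- The weak perfect graph theorem. -/
theorem IsPerfect.compl (hG : G.IsPerfect) : Gᶜ.IsPerfect :=
  isPerfect_of_card_le_mul fun s => by rw [compl_compl, mul_comm]; exact hG.card_le_mul s

theorem IsPerfect.comap {W : Type*} (hG : G.IsPerfect) (f : W → V) : (G.comap f).IsPerfect := by
  classical
  intro s
  obtain ⟨c, hlt, hadj⟩ := hG (s.image f)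
  refine ColorableOn.mono ⟨c ∘ f, fun v hv => hlt _ (mem_image_of_mem f hv),
    fun u hu v hv huv => hadj _ (mem_image_of_mem f hu) _ (mem_image_of_mem f hv) huv⟩
    subset_rfl ?_
  obtain ⟨K, hKs, hK, hKcard⟩ := G.exists_isClique_card_eq_cliqueNumOn (s.image f)
  have hpre : ∀ v : K, ∃ a ∈ s, f a = v := fun v => mem_image.1 (hKs v.2)
  choose g hgs hfg using hpre
  have hinj : Function.Injective g := fun u v h =>
    Subtype.ext ((hfg u).symm.trans (h ▸ hfg v))
  rw [← hKcard, ← Fintype.card_coe K, ← card_univ, ← card_image_of_injective _ hinj]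
  refine IsClique.card_le_cliqueNumOn (image_subset_iff.2 fun v _ => hgs v) ?_
  intro a ha b hb hab
  obtain ⟨u, -, rfl⟩ := mem_image.1 ha
  obtain ⟨v, -, rfl⟩ := mem_image.1 hb
  have huv : (u : V) ≠ v := fun h => hab (congrArg g (Subtype.ext h))
  simpa [comap_adj, hfg] using hK u.2 v.2 huv

theorem ColorableOn.sum_le_of_compl {s : Finset V} {n : ℕ} {z : V → ℝ}
    (hc : Gᶜ.ColorableOn s n) (hz : ∀ K ⊆ s, G.IsClique (K : Set V) → ∑ v ∈ K, z v ≤ 1) :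
    ∑ v ∈ s, z v ≤ n := by
  obtain ⟨c, hlt, hadj⟩ := hc
  rw [← sum_fiberwise_of_maps_to fun v hv => mem_range.2 (hlt v hv)]
  refine (sum_le_sum fun j _ => hz _ (filter_subset _ s) ?_).trans (by simp)
  intro u hu v hv huv
  simp only [coe_filter, Set.mem_ofPred_eq] at hu hv
  by_contra h
  exact hadj u hu.1 v hv.1 ((compl_adj G u v).2 ⟨huv, h⟩) (hu.2.trans hv.2.symm)

end SimpleGraph

section WeightedIndependenceNumber

variable {V : Type*} [Fintype V] {G : SimpleGraph V}

theorem finite_indepSetWeights (G : SimpleGraph V) (w : V → ℝ) :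
    {r : ℝ | ∃ I : Finset V, IsIndepSet G I ∧ r = ∑ i ∈ I, w i}.Finite :=
  (Set.finite_range fun I : Finset V => ∑ i ∈ I, w i).subset fun _ ⟨I, _, hr⟩ => ⟨I, hr.symm⟩

theorem sum_le_alphaW (w : V → ℝ) {I : Finset V} (hI : IsIndepSet G I) :
    ∑ i ∈ I, w i ≤ alphaW G w :=
  le_csSup (finite_indepSetWeights G w).bddAbove ⟨I, hI, rfl⟩

theorem exists_isIndepSet_sum_eq_alphaW (G : SimpleGraph V) (w : V → ℝ) :
    ∃ I : Finset V, IsIndepSet G I ∧ ∑ i ∈ I, w i = alphaW G w := by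
  have hne : {r : ℝ | ∃ I : Finset V, IsIndepSet G I ∧ r = ∑ i ∈ I, w i}.Nonempty :=
    ⟨0, ∅, by simp [IsIndepSet], by simp⟩
  obtain ⟨I, hI, h⟩ := hne.csSup_mem (finite_indepSetWeights G w)
  exact ⟨I, hI, h.symm⟩

theorem alphaW_le_mul_add_card {u w : V → ℝ} {c : ℝ} (hc : 0 ≤ c)
    (hu : ∀ v, u v ≤ c * w v + 1) : alphaW G u ≤ c * alphaW G w + Fintype.card V := by
  obtain ⟨I, hI, hIu⟩ := exists_isIndepSet_sum_eq_alphaW G u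
  calc alphaW G u = ∑ i ∈ I, u i := hIu.symm
    _ ≤ ∑ i ∈ I, (c * w i + 1) := sum_le_sum fun i _ => hu i
    _ = c * ∑ i ∈ I, w i + #I := by rw [sum_add_distrib, mul_sum, sum_const, nsmul_one]
    _ ≤ c * alphaW G w + Fintype.card V := by
        gcongr
        · exact sum_le_alphaW w hI
        · exact_mod_cast card_le_univ I

end WeightedIndependenceNumber

namespace SimpleGraph.IsPerfect

variable {V : Type*} [Fintype V] {G : SimpleGraph V}

/-- Blow each vertex `v` up into `m v` pairwise non-adjacent copies: the blown-up graph is perfect,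
so by the weak perfect graph theorem it is covered by `α` cliques, each of weight at most `1`. -/
theorem sum_natCast_mul_le_alphaW (hG : G.IsPerfect) {y : V → ℝ}
    (hy : ∀ K : Finset V, G.IsClique (K : Set V) → ∑ v ∈ K, y v ≤ 1) (m : V → ℕ) :
    ∑ v, (m v : ℝ) * y v ≤ alphaW G fun v => (m v : ℝ) := by
  classical
  let H := G.comap (Sigma.fst : (Σ v, Fin (m v)) → V)
  have hcl : ∀ K ⊆ (univ : Finset (Σ v, Fin (m v))), H.IsClique (K : Set _) →
      ∑ a ∈ K, y a.1 ≤ 1 := by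
    intro K _ hK
    have hinj : Set.InjOn Sigma.fst (K : Set _) := fun a ha b hb h =>
      by_contra fun hab => G.ne_of_adj (hK ha hb hab) h
    rw [← sum_image hinj]
    refine hy _ fun u hu v hv huv => ?_
    obtain ⟨a, ha, rfl⟩ := mem_image.1 hu
    obtain ⟨b, hb, rfl⟩ := mem_image.1 hv
    exact hK ha hb fun h => huv (h ▸ rfl)
  obtain ⟨K, -, hK, hKcard⟩ := Hᶜ.exists_isClique_card_eq_cliqueNumOn univ
  have hKind : _root_.IsIndepSet G (K.image Sigma.fst) := by
    intro u hu v hv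
    obtain ⟨a, ha, rfl⟩ := mem_image.1 hu
    obtain ⟨b, hb, rfl⟩ := mem_image.1 hv
    rcases eq_or_ne a b with rfl | hab
    · exact G.irrefl
    · exact ((compl_adj H a b).1 (hK ha hb hab)).2
  have hfiber : ∀ v, #{a ∈ K | a.1 = v} ≤ m v := by
    intro v
    have hcopies : {a ∈ (univ : Finset (Σ v, Fin (m v))) | a.1 = v} =
        ({v} : Finset V).sigma fun _ => univ := by
      ext ⟨u, i⟩
      simp [eq_comm]
    calc #{a ∈ K | a.1 = v} ≤ #{a ∈ univ | a.1 = v} :=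
          card_le_card (filter_subset_filter _ (subset_univ K))
      _ = m v := by simp [hcopies]
  calc ∑ v, (m v : ℝ) * y v = ∑ a : Σ v, Fin (m v), y a.1 := by simp [Fintype.sum_sigma]
    _ ≤ #K := hKcard ▸ ((hG.comap _).compl univ).sum_le_of_compl hcl
    _ ≤ ∑ v ∈ K.image Sigma.fst, (m v : ℝ) := by
        rw [card_eq_sum_card_image Sigma.fst K]
        exact_mod_cast sum_le_sum fun v _ => hfiber v
    _ ≤ alphaW G fun v => (m v : ℝ) := sum_le_alphaW _ hKind

theorem sum_mul_le_alphaW (hG : G.IsPerfect) {y : V → ℝ} (hy0 : ∀ v, 0 ≤ y v)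
    (hy : ∀ K : Finset V, G.IsClique (K : Set V) → ∑ v ∈ K, y v ≤ 1)
    {w : V → ℝ} (hw : ∀ v, 0 ≤ w v) : ∑ v, w v * y v ≤ alphaW G w := by
  refine le_of_forall_pos_le_add fun ε hε => ?_
  obtain ⟨M, hM⟩ := exists_nat_gt (Fintype.card V / ε)
  have hMpos : (0 : ℝ) < M := lt_of_le_of_lt (by positivity) hM
  have hround : M * ∑ v, w v * y v ≤ ∑ v, (⌈M * w v⌉₊ : ℝ) * y v := by
    rw [mul_sum]
    exact sum_le_sum fun v _ => by
      rw [← mul_assoc]; exact mul_le_mul_of_nonneg_right (Nat.le_ceil _) (hy0 v)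
  have hα := alphaW_le_mul_add_card (G := G) hMpos.le
    fun v => (Nat.ceil_lt_add_one (mul_nonneg hMpos.le (hw v))).le
  have hcard : (Fintype.card V : ℝ) ≤ M * ε := by
    rw [div_lt_iff₀ hε] at hM; linarith
  have hint := hG.sum_natCast_mul_le_alphaW hy fun v => ⌈M * w v⌉₊
  refine le_of_mul_le_mul_left ?_ hMpos
  linarith

end SimpleGraph.IsPerfect

theorem Finset.sum_mul_sum_self_of_anticomm {ι R : Type*} [NonUnitalNonAssocRing R]
    (K : Finset ι) (a : ι → R) (h : ∀ i ∈ K, ∀ j ∈ K, i ≠ j → a i * a j = -(a j * a i)) :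
    (∑ i ∈ K, a i) * (∑ i ∈ K, a i) = ∑ i ∈ K, a i * a i := by
  classical
  induction K using Finset.induction_on with
  | empty => simp
  | insert k K hk ih =>
    have hK : ∀ i ∈ K, ∀ j ∈ K, i ≠ j → a i * a j = -(a j * a i) := fun i hi j hj =>
      h i (mem_insert_of_mem hi) j (mem_insert_of_mem hj)
    have hcross : a k * ∑ i ∈ K, a i + (∑ i ∈ K, a i) * a k = 0 := by
      rw [mul_sum, sum_mul, ← sum_add_distrib]
      refine sum_eq_zero fun i hi => ?_
      rw [h k (mem_insert_self k K) i (mem_insert_of_mem hi) (ne_of_mem_of_not_mem hi hk).symm,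
        neg_add_cancel]
    rw [sum_insert hk, sum_insert hk, ← ih hK, ← add_zero (a k * a k + _), ← hcross]
    simp only [add_mul, mul_add]
    abel

theorem expectation_sq_le_expectation_mul_self {d : ℕ} {A : Matrix (Fin d) (Fin d) ℂ}
    (hA : A.IsHermitian) {ψ : Fin d → ℂ} (hψ : star ψ ⬝ᵥ ψ = 1) :
    expectation A ψ ^ 2 ≤ expectation (A * A) ψ := by
  have hCS := inner_mul_inner_self_le (𝕜 := ℂ) (WithLp.toLp 2 ψ) (WithLp.toLp 2 (A *ᵥ ψ))
  rw [norm_inner_symm (WithLp.toLp 2 (A *ᵥ ψ))] at hCS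
  simp only [EuclideanSpace.inner_toLp_toLp, RCLike.re_to_complex] at hCS
  rw [dotProduct_comm ψ, hψ, Complex.one_re, one_mul, dotProduct_comm (A *ᵥ ψ), star_mulVec,
    hA.eq, dotProduct_comm (A *ᵥ ψ), ← dotProduct_mulVec, mulVec_mulVec] at hCS
  calc expectation A ψ ^ 2 ≤ ‖star ψ ⬝ᵥ (A *ᵥ ψ)‖ * ‖star ψ ⬝ᵥ (A *ᵥ ψ)‖ := by
        rw [← sq, ← Complex.normSq_eq_norm_sq, sq]
        exact Complex.re_sq_le_normSq _
    _ ≤ expectation (A * A) ψ := hCS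

theorem expectation_sum_smul {ι : Type*} {d : ℕ} (K : Finset ι) (x : ι → ℝ)
    (A : ι → Matrix (Fin d) (Fin d) ℂ) (ψ : Fin d → ℂ) :
    expectation (∑ i ∈ K, x i • A i) ψ = ∑ i ∈ K, x i * expectation (A i) ψ := by
  simp [expectation, sum_mulVec, dotProduct_sum, Complex.re_sum, smul_mulVec, dotProduct_smul]

theorem expectation_smul_one {d : ℕ} (c : ℝ) {ψ : Fin d → ℂ} (hψ : star ψ ⬝ᵥ ψ = 1) :
    expectation (c • 1) ψ = c := by
  simp [expectation, smul_mulVec, dotProduct_smul, hψ]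

theorem IsRealization.sum_sq_expectation_le_one {V : Type*} {G : SimpleGraph V} {d : ℕ}
    {S : V → Matrix (Fin d) (Fin d) ℂ} (hS : IsRealization G d S) {ψ : Fin d → ℂ}
    (hψ : star ψ ⬝ᵥ ψ = 1) {K : Finset V} (hK : G.IsClique (K : Set V)) :
    ∑ i ∈ K, expectation (S i) ψ ^ 2 ≤ 1 := by
  classical
  obtain ⟨hherm, hsq, hanti, -⟩ := hS
  set x := fun i => expectation (S i) ψ
  set T := ∑ i ∈ K, x i • S i
  have hT : T.IsHermitian := isHermitian_iff_isSelfAdjoint.2 <|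
    isSelfAdjoint_sum K fun i _ => isHermitian_iff_isSelfAdjoint.1 <|
      (hherm i).smul (IsSelfAdjoint.all (x i))
  have hTT : T * T = (∑ i ∈ K, x i ^ 2) • 1 := by
    rw [sum_mul_sum_self_of_anticomm K (fun i => x i • S i), sum_smul]
    · exact sum_congr rfl fun i _ => by rw [smul_mul_smul_comm, hsq, sq]
    · intro i hi j hj hij
      rw [smul_mul_smul_comm, smul_mul_smul_comm, hanti i j (hK hi hj hij), smul_neg, mul_comm]
  have hTψ : expectation T ψ = ∑ i ∈ K, x i ^ 2 := by
    simp only [T, expectation_sum_smul, sq, x]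
  have hCS := expectation_sq_le_expectation_mul_self hT hψ
  rw [hTψ, hTT, expectation_smul_one _ hψ] at hCS
  nlinarith [sum_nonneg fun i (_ : i ∈ K) => sq_nonneg (x i)]

theorem exists_ne_zero_forall_mulVec_eq_or_eq_neg {ι n R : Type*} [Fintype n] [DecidableEq n]
    [Nonempty n] [Ring R] [Nontrivial R] (A : ι → Matrix n n R) (I : Finset ι)
    (hsq : ∀ i ∈ I, A i * A i = 1) (hcomm : ∀ i ∈ I, ∀ j ∈ I, Commute (A i) (A j)) :
    ∃ ψ : n → R, ψ ≠ 0 ∧ ∀ i ∈ I, A i *ᵥ ψ = ψ ∨ A i *ᵥ ψ = -ψ := by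
  classical
  induction I using Finset.induction_on with
  | empty =>
    obtain ⟨ψ, hψ⟩ := exists_ne (0 : n → R)
    exact ⟨ψ, hψ, by simp⟩
  | insert j I hj ih =>
    obtain ⟨ψ, hψ0, hψ⟩ := ih (fun i hi => hsq i (mem_insert_of_mem hi))
      fun i hi k hk => hcomm i (mem_insert_of_mem hi) k (mem_insert_of_mem hk)
    by_cases hφ : ψ + A j *ᵥ ψ = 0
    · refine ⟨ψ, hψ0, fun i hi => ?_⟩
      rcases mem_insert.1 hi with rfl | hi
      · exact Or.inr (eq_neg_of_add_eq_zero_right hφ)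
      · exact hψ i hi
    · refine ⟨ψ + A j *ᵥ ψ, hφ, fun i hi => ?_⟩
      rcases mem_insert.1 hi with rfl | hi
      · left
        rw [mulVec_add, mulVec_mulVec, hsq i (mem_insert_self i I), one_mulVec, add_comm]
      · have hji : A i *ᵥ (A j *ᵥ ψ) = A j *ᵥ (A i *ᵥ ψ) := by
          rw [mulVec_mulVec, mulVec_mulVec,
            (hcomm i (mem_insert_of_mem hi) j (mem_insert_self j I)).eq]
        rw [mulVec_add, hji]
        rcases hψ i hi with h | h
        · exact Or.inl (by rw [h])
        · exact Or.inr (by rw [h, mulVec_neg, neg_add])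

open scoped ComplexOrder in
theorem exists_smul_star_dotProduct_self_eq_one {n : Type*} [Fintype n] {ψ : n → ℂ}
    (hψ : ψ ≠ 0) : ∃ c : ℂ, star (c • ψ) ⬝ᵥ (c • ψ) = 1 := by
  obtain ⟨r, hr, hψr⟩ := RCLike.pos_iff_exists_ofReal.1 (dotProduct_star_self_pos_iff.2 hψ)
  refine ⟨((√r)⁻¹ : ℝ), ?_⟩
  rw [star_smul, smul_dotProduct, dotProduct_smul, ← hψr]
  simp only [smul_eq_mul, RCLike.star_def, Complex.conj_ofReal]
  have hsqrt : (√r : ℂ) * √r = r := by exact_mod_cast Real.mul_self_sqrt hr.le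
  push_cast
  rw [← mul_assoc, ← mul_inv, hsqrt]
  exact inv_mul_cancel₀ (by exact_mod_cast hr.ne')

theorem IsRealization.exists_unit_expectation_sq_eq_one {V : Type*} {G : SimpleGraph V} {d : ℕ}
    {S : V → Matrix (Fin d) (Fin d) ℂ} (hS : IsRealization G d S) (hd : 1 ≤ d) {I : Finset V}
    (hI : IsIndepSet G I) :
    ∃ ψ : Fin d → ℂ, star ψ ⬝ᵥ ψ = 1 ∧ ∀ i ∈ I, expectation (S i) ψ ^ 2 = 1 := by
  obtain ⟨-, hsq, -, hcomm⟩ := hS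
  have : Nonempty (Fin d) := ⟨⟨0, hd⟩⟩
  obtain ⟨ψ, hψ0, hψ⟩ := exists_ne_zero_forall_mulVec_eq_or_eq_neg S I (fun i _ => hsq i)
    fun i hi j hj => by
      rcases eq_or_ne i j with rfl | hij
      · exact Commute.refl _
      · exact hcomm i j hij (hI i hi j hj)
  obtain ⟨c, hc⟩ := exists_smul_star_dotProduct_self_eq_one hψ0
  refine ⟨c • ψ, hc, fun i hi => ?_⟩
  rcases hψ i hi with h | h
  · rw [expectation, mulVec_smul, h, hc, Complex.one_re, one_pow]
  · rw [expectation, mulVec_smul, h, smul_neg, dotProduct_neg, hc, Complex.neg_re,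
      Complex.one_re, neg_one_sq]

/-- Every perfect finite simple graph is ħ-perfect. -/
theorem stmt_1 {V : Type*} [Fintype V] (G : SimpleGraph V)
    (hperf : ∀ s : Set V,
      (SimpleGraph.induce s G).chromaticNumber = ((SimpleGraph.induce s G).cliqueNum : ℕ∞)) :
    HbarPerfect G := by
  intro d hd S hS w hw
  have hG : G.IsPerfect := SimpleGraph.isPerfect_of_chromaticNumber_induce_le fun s => (hperf s).le
  have hupper : ∀ ψ : Fin d → ℂ, star ψ ⬝ᵥ ψ = 1 →
      ∑ i, w i * expectation (S i) ψ ^ 2 ≤ alphaW G w := fun ψ hψ =>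
    hG.sum_mul_le_alphaW (fun _ => sq_nonneg _) (fun _ hK => hS.sum_sq_expectation_le_one hψ hK) hw
  obtain ⟨I, hI, hIw⟩ := exists_isIndepSet_sum_eq_alphaW G w
  obtain ⟨ψ, hψ, hψI⟩ := hS.exists_unit_expectation_sq_eq_one hd hI
  have hlower : alphaW G w ≤ ∑ i, w i * expectation (S i) ψ ^ 2 :=
    calc alphaW G w = ∑ i ∈ I, w i * expectation (S i) ψ ^ 2 := by
          rw [← hIw]; exact sum_congr rfl fun i hi => by rw [hψI i hi, mul_one]
      _ ≤ ∑ i, w i * expectation (S i) ψ ^ 2 :=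
          sum_le_sum_of_subset_of_nonneg (subset_univ I) fun i _ _ =>
            mul_nonneg (hw i) (sq_nonneg _)
  exact IsGreatest.csSup_eq ⟨⟨ψ, hψ, le_antisymm hlower (hupper ψ hψ)⟩,
    fun _ ⟨φ, hφ, hr⟩ => hr ▸ hupper φ hφ⟩
end

section
/- Let G be a finite simple graph on a vertex type V, let v ∈ V, and let G' be the graph obtained from G by splitting the vertex v: G' has vertex set V ⊕ Unit, where vertices coming from V are adjacent in G' iff they are adjacent in G, and the new vertex ⋆ is adjacent in G' exactly to v and to the neighbors of v in G. If G is ħ-perfect, then G' is ħ-perfect. -/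
open Matrix

/-!
Write `⋆` for the new vertex. In a realization `S'` of `G'` the observables of `v` and `⋆`
anticommute, so for `c ^ 2 + s ^ 2 = 1` the combination `c S'ᵥ + s S'⋆` is again a Hermitian
involution; since `⋆` sees exactly `v` and the neighbours of `v`, replacing the pair by it yields a
realization of `G`. Give `v` the larger of the two weights. For a fixed state, taking `(c, s)`
proportional to `(⟨S'ᵥ⟩, ⟨S'⋆⟩)` bounds `β_{S'}(w')` by `α(G, w)`, and taking `(c, s) = (1, 0)` or
`(0, 1)`, whichever picks the larger weight, gives the reverse bound; both use that `G` is
ħ-perfect. Finally `α(G', w') = α(G, w)`, as an independent set of `G'` contains at most one of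
`v` and `⋆`.
-/

section Expectation

variable {d : ℕ}

theorem expectation_add (A B : Matrix (Fin d) (Fin d) ℂ) (ψ : Fin d → ℂ) :
    expectation (A + B) ψ = expectation A ψ + expectation B ψ := by
  simp [expectation, add_mulVec]

theorem expectation_smul (c : ℝ) (A : Matrix (Fin d) (Fin d) ℂ) (ψ : Fin d → ℂ) :
    expectation (c • A) ψ = c * expectation A ψ := by
  simp [expectation, smul_mulVec]

theorem expectation_sq_le_one {A : Matrix (Fin d) (Fin d) ℂ} (hA : A.IsHermitian)
    (hA2 : A * A = 1) {ψ : Fin d → ℂ} (hψ : star ψ ⬝ᵥ ψ = 1) :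
    expectation A ψ ^ 2 ≤ 1 := by
  set u : EuclideanSpace ℂ (Fin d) := WithLp.toLp 2 ψ
  set v : EuclideanSpace ℂ (Fin d) := WithLp.toLp 2 (A *ᵥ ψ)
  have hu : ‖u‖ ^ 2 = 1 := by
    rw [norm_sq_eq_re_inner (𝕜 := ℂ), EuclideanSpace.inner_eq_star_dotProduct, dotProduct_comm]
    simp [u, hψ]
  have hv : ‖v‖ ^ 2 = 1 := by
    rw [norm_sq_eq_re_inner (𝕜 := ℂ), EuclideanSpace.inner_eq_star_dotProduct, dotProduct_comm]
    simp [v, star_mulVec, hA.eq, ← dotProduct_mulVec, mulVec_mulVec, hA2, hψ]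
  have hx : |expectation A ψ| ≤ ‖u‖ * ‖v‖ := calc
    |expectation A ψ| ≤ ‖inner ℂ u v‖ := by
      rw [EuclideanSpace.inner_eq_star_dotProduct, dotProduct_comm]
      exact Complex.abs_re_le_norm _
    _ ≤ ‖u‖ * ‖v‖ := norm_inner_le_norm u v
  calc expectation A ψ ^ 2 = |expectation A ψ| ^ 2 := (sq_abs _).symm
    _ ≤ (‖u‖ * ‖v‖) ^ 2 := by gcongr
    _ = 1 := by rw [mul_pow, hu, hv, one_mul]

end Expectation

section Rotation

variable {R : Type*} [Ring R] [Algebra ℝ R] {A B X : R}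

theorem smul_add_smul_mul_self (hA : A * A = 1) (hB : B * B = 1) (hAB : A * B = -(B * A))
    {c s : ℝ} (hcs : c ^ 2 + s ^ 2 = 1) : (c • A + s • B) * (c • A + s • B) = 1 := by
  simp only [add_mul, mul_add, smul_mul_smul_comm, hA, hB, hAB, smul_neg, mul_comm s c]
  rw [add_assoc, add_neg_cancel_left, ← add_smul, ← sq, ← sq, hcs, one_smul]

theorem mul_smul_add_smul_of_anticomm (hA : X * A = -(A * X)) (hB : X * B = -(B * X))
    (c s : ℝ) : X * (c • A + s • B) = -((c • A + s • B) * X) := by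
  simp only [mul_add, add_mul, mul_smul_comm, smul_mul_assoc, hA, hB, smul_neg, neg_add]

end Rotation

namespace IsRealization

variable {V : Type*} {H : SimpleGraph V} {d : ℕ} {S : V → Matrix (Fin d) (Fin d) ℂ} {i j k : V}

theorem isHermitian_smul_add_smul (hS : IsRealization H d S) (c s : ℝ) :
    (c • S i + s • S j).IsHermitian :=
  isHermitian_iff_isSelfAdjoint.mpr <| ((IsSelfAdjoint.all c).smul (hS.1 i).isSelfAdjoint).add
    ((IsSelfAdjoint.all s).smul (hS.1 j).isSelfAdjoint)

theorem smul_add_smul_mul_self (hS : IsRealization H d S) (hij : H.Adj i j) {c s : ℝ}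
    (hcs : c ^ 2 + s ^ 2 = 1) : (c • S i + s • S j) * (c • S i + s • S j) = 1 :=
  _root_.smul_add_smul_mul_self (hS.2.1 i) (hS.2.1 j) (hS.2.2.1 i j hij) hcs

theorem mul_smul_add_smul_of_adj (hS : IsRealization H d S) (hki : H.Adj k i) (hkj : H.Adj k j)
    (c s : ℝ) : S k * (c • S i + s • S j) = -((c • S i + s • S j) * S k) :=
  mul_smul_add_smul_of_anticomm (hS.2.2.1 k i hki) (hS.2.2.1 k j hkj) c s

theorem commute_smul_add_smul (hS : IsRealization H d S) (hki : k ≠ i) (hkj : k ≠ j)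
    (hnki : ¬H.Adj k i) (hnkj : ¬H.Adj k j) (c s : ℝ) : Commute (S k) (c • S i + s • S j) :=
  ((Commute.smul_right (hS.2.2.2 k i hki hnki) c).add_right
    (Commute.smul_right (hS.2.2.2 k j hkj hnkj) s))

end IsRealization

theorem exists_sq_add_sq_eq_one_mul_add_mul_sq (x y : ℝ) :
    ∃ c s : ℝ, c ^ 2 + s ^ 2 = 1 ∧ (c * x + s * y) ^ 2 = x ^ 2 + y ^ 2 := by
  set z : ℂ := ⟨x, y⟩
  refine ⟨Real.cos z.arg, Real.sin z.arg, Real.cos_sq_add_sin_sq _, ?_⟩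
  have hx : ‖z‖ * Real.cos z.arg = x := Complex.norm_mul_cos_arg z
  have hy : ‖z‖ * Real.sin z.arg = y := Complex.norm_mul_sin_arg z
  have hz : ‖z‖ ^ 2 = x ^ 2 + y ^ 2 := by rw [Complex.sq_norm, Complex.normSq_apply]; ring
  have hr : Real.cos z.arg * x + Real.sin z.arg * y = ‖z‖ := by
    rw [← hx, ← hy]
    linear_combination ‖z‖ * Real.cos_sq_add_sin_sq z.arg
  rw [hr, hz]

theorem exists_sq_add_sq_eq_one_le_max_mul_sq (p q x y : ℝ) :
    ∃ c s : ℝ, c ^ 2 + s ^ 2 = 1 ∧ p * x ^ 2 + q * y ^ 2 ≤ max p q * (c * x + s * y) ^ 2 := by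
  obtain ⟨c, s, hcs, hxy⟩ := exists_sq_add_sq_eq_one_mul_add_mul_sq x y
  refine ⟨c, s, hcs, ?_⟩
  rw [hxy]
  nlinarith [le_max_left p q, le_max_right p q, sq_nonneg x, sq_nonneg y]

theorem exists_sq_add_sq_eq_one_max_mul_sq_le {p q : ℝ} (hp : 0 ≤ p) (hq : 0 ≤ q) :
    ∃ c s : ℝ, c ^ 2 + s ^ 2 = 1 ∧
      ∀ x y : ℝ, max p q * (c * x + s * y) ^ 2 ≤ p * x ^ 2 + q * y ^ 2 := by
  rcases le_total q p with h | h
  · refine ⟨1, 0, by norm_num, fun x y => ?_⟩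
    rw [max_eq_left h]
    nlinarith [mul_nonneg hq (sq_nonneg y)]
  · refine ⟨0, 1, by norm_num, fun x y => ?_⟩
    rw [max_eq_right h]
    nlinarith [mul_nonneg hp (sq_nonneg x)]

section BetaAlpha

variable {V : Type*} [Fintype V]

theorem le_betaVal {d : ℕ} {S : V → Matrix (Fin d) (Fin d) ℂ} {w : V → ℝ}
    (hH : ∀ i, (S i).IsHermitian) (hI : ∀ i, S i * S i = 1) (hw : ∀ i, 0 ≤ w i)
    {ψ : Fin d → ℂ} (hψ : star ψ ⬝ᵥ ψ = 1) :
    ∑ i, w i * expectation (S i) ψ ^ 2 ≤ betaVal S w := by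
  refine le_csSup ⟨∑ i, w i, ?_⟩ ⟨ψ, hψ, rfl⟩
  rintro r ⟨φ, hφ, rfl⟩
  gcongr with i
  exact mul_le_of_le_one_right (hw i) (expectation_sq_le_one (hH i) (hI i) hφ)

theorem betaVal_le {d : ℕ} (hd : 1 ≤ d) {S : V → Matrix (Fin d) (Fin d) ℂ} {w : V → ℝ} {b : ℝ}
    (h : ∀ ψ : Fin d → ℂ, star ψ ⬝ᵥ ψ = 1 → ∑ i, w i * expectation (S i) ψ ^ 2 ≤ b) :
    betaVal S w ≤ b := by
  refine csSup_le ⟨_, Pi.single ⟨0, hd⟩ 1, by simp, rfl⟩ ?_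
  rintro r ⟨ψ, hψ, rfl⟩
  exact h ψ hψ

theorem le_alphaW (G : SimpleGraph V) (w : V → ℝ) {I : Finset V} (hI : IsIndepSet G I) :
    ∑ i ∈ I, w i ≤ alphaW G w := by
  refine le_csSup ((Set.finite_range fun J : Finset V => ∑ i ∈ J, w i).subset ?_).bddAbove
    ⟨I, hI, rfl⟩
  rintro r ⟨J, -, rfl⟩
  exact ⟨J, rfl⟩

theorem alphaW_le (G : SimpleGraph V) (w : V → ℝ) {b : ℝ}
    (h : ∀ I : Finset V, IsIndepSet G I → ∑ i ∈ I, w i ≤ b) : alphaW G w ≤ b := by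
  refine csSup_le ⟨0, ∅, by simp [IsIndepSet], by simp⟩ ?_
  rintro r ⟨I, hI, rfl⟩
  exact h I hI

end BetaAlpha

def mergeWeight {V : Type*} [DecidableEq V] (w : V ⊕ Unit → ℝ) (v : V) : V → ℝ :=
  Function.update (w ∘ Sum.inl) v (max (w (Sum.inl v)) (w (Sum.inr ())))

theorem le_mergeWeight {V : Type*} [DecidableEq V] (w : V ⊕ Unit → ℝ) (v a : V) :
    w (Sum.inl a) ≤ mergeWeight w v a := by
  rcases eq_or_ne a v with rfl | ha
  · simp [mergeWeight]
  · simp [mergeWeight, ha]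

noncomputable def mergeRealization {V : Type*} [DecidableEq V] {d : ℕ}
    (S : V ⊕ Unit → Matrix (Fin d) (Fin d) ℂ) (v : V) (c s : ℝ) : V → Matrix (Fin d) (Fin d) ℂ :=
  Function.update (S ∘ Sum.inl) v (c • S (Sum.inl v) + s • S (Sum.inr ()))

theorem sum_sum_unit_eq_sum_compl_add {V M : Type*} [Fintype V] [DecidableEq V]
    [AddCommMonoid M] (v : V) (f : V ⊕ Unit → M) :
    ∑ x, f x = ∑ a ∈ {v}ᶜ, f (Sum.inl a) + (f (Sum.inl v) + f (Sum.inr ())) := by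
  rw [Fintype.sum_sum_type, Fintype.sum_eq_add_sum_compl v, Fintype.sum_unique]
  abel

theorem sum_mergeWeight_mul_expectation_sq {V : Type*} [Fintype V] [DecidableEq V] {d : ℕ}
    (S : V ⊕ Unit → Matrix (Fin d) (Fin d) ℂ) (w : V ⊕ Unit → ℝ) (v : V) (c s : ℝ)
    (ψ : Fin d → ℂ) :
    ∑ a, mergeWeight w v a * expectation (mergeRealization S v c s a) ψ ^ 2 =
      ∑ a ∈ {v}ᶜ, w (Sum.inl a) * expectation (S (Sum.inl a)) ψ ^ 2 +
        max (w (Sum.inl v)) (w (Sum.inr ())) *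
          (c * expectation (S (Sum.inl v)) ψ + s * expectation (S (Sum.inr ())) ψ) ^ 2 := by
  rw [Fintype.sum_eq_add_sum_compl v, add_comm]
  congr 1
  · refine Finset.sum_congr rfl fun a ha => ?_
    have ha : a ≠ v := by simpa using ha
    simp [mergeWeight, mergeRealization, ha]
  · simp [mergeWeight, mergeRealization, expectation_add, expectation_smul]

structure IsVertexSplit {V : Type*} (G : SimpleGraph V) (v : V) (G' : SimpleGraph (V ⊕ Unit)) :
    Prop where
  adj_inl_inl : ∀ a b, G'.Adj (Sum.inl a) (Sum.inl b) ↔ G.Adj a b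
  adj_inl_inr : ∀ a, G'.Adj (Sum.inl a) (Sum.inr ()) ↔ (a = v ∨ G.Adj a v)

namespace IsVertexSplit

variable {V : Type*} {G : SimpleGraph V} {v : V} {G' : SimpleGraph (V ⊕ Unit)}

theorem isIndepSet_toLeft (h : IsVertexSplit G v G') {I : Finset (V ⊕ Unit)}
    (hI : IsIndepSet G' I) : IsIndepSet G I.toLeft := fun a ha b hb hab =>
  hI _ (Finset.mem_toLeft.mp ha) _ (Finset.mem_toLeft.mp hb) ((h.adj_inl_inl a b).mpr hab)

theorem isIndepSet_insert_toLeft [DecidableEq V] (h : IsVertexSplit G v G')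
    {I : Finset (V ⊕ Unit)} (hI : IsIndepSet G' I) (hr : Sum.inr () ∈ I) :
    v ∉ I.toLeft ∧ IsIndepSet G (insert v I.toLeft) := by
  have hnadj : ∀ a ∈ I.toLeft, ¬(a = v ∨ G.Adj a v) := fun a ha hav =>
    hI _ (Finset.mem_toLeft.mp ha) _ hr ((h.adj_inl_inr a).mpr hav)
  refine ⟨fun hv => hnadj v hv (Or.inl rfl), ?_⟩
  intro a ha b hb
  rcases Finset.mem_insert.mp ha with rfl | ha' <;> rcases Finset.mem_insert.mp hb with rfl | hb'
  · exact G.irrefl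
  · exact fun hab => hnadj b hb' (Or.inr hab.symm)
  · exact fun hab => hnadj a ha' (Or.inr hab)
  · exact h.isIndepSet_toLeft hI a ha' b hb'

theorem isIndepSet_disjSum_empty (h : IsVertexSplit G v G') {I : Finset V}
    (hI : IsIndepSet G I) : IsIndepSet G' (I.disjSum ∅) := by
  intro x hx y hy
  obtain ⟨a, ha, rfl⟩ | ⟨_, h', -⟩ := Finset.mem_disjSum.mp hx
  · obtain ⟨b, hb, rfl⟩ | ⟨_, h', -⟩ := Finset.mem_disjSum.mp hy
    · rw [h.adj_inl_inl]
      exact hI a ha b hb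
    · simp at h'
  · simp at h'

theorem isIndepSet_erase_disjSum [DecidableEq V] (h : IsVertexSplit G v G') {I : Finset V}
    (hI : IsIndepSet G I) (hv : v ∈ I) : IsIndepSet G' ((I.erase v).disjSum {()}) := by
  have hnew : ∀ a ∈ I.erase v, ¬G'.Adj (Sum.inl a) (Sum.inr ()) := by
    intro a ha hadj
    rcases (h.adj_inl_inr a).mp hadj with rfl | hav
    · exact Finset.notMem_erase a I ha
    · exact hI a (Finset.mem_of_mem_erase ha) v hv hav
  intro x hx y hy
  obtain ⟨a, ha, rfl⟩ | ⟨⟨⟩, -, rfl⟩ := Finset.mem_disjSum.mp hx <;>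
    obtain ⟨b, hb, rfl⟩ | ⟨⟨⟩, -, rfl⟩ := Finset.mem_disjSum.mp hy
  · rw [h.adj_inl_inl]
    exact hI a (Finset.mem_of_mem_erase ha) b (Finset.mem_of_mem_erase hb)
  · exact hnew a ha
  · exact fun hadj => hnew b hb hadj.symm
  · exact G'.irrefl

theorem alphaW_eq [Fintype V] [DecidableEq V] (h : IsVertexSplit G v G') (w : V ⊕ Unit → ℝ) :
    alphaW G' w = alphaW G (mergeWeight w v) := by
  apply le_antisymm
  · refine alphaW_le G' w fun I hI => ?_
    rw [← Finset.toLeft_disjSum_toRight (u := I), Finset.sum_disjSum]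
    have hleft : ∑ a ∈ I.toLeft, w (Sum.inl a) ≤ ∑ a ∈ I.toLeft, mergeWeight w v a :=
      Finset.sum_le_sum fun a _ => le_mergeWeight w v a
    by_cases hr : Sum.inr () ∈ I
    · obtain ⟨hv, hind⟩ := h.isIndepSet_insert_toLeft hI hr
      have hright : I.toRight = {()} := by ext ⟨⟩; simpa using hr
      calc _ ≤ ∑ a ∈ I.toLeft, mergeWeight w v a + mergeWeight w v v := by
            rw [hright, Finset.sum_singleton]
            gcongr
            simp [mergeWeight]
        _ = ∑ a ∈ insert v I.toLeft, mergeWeight w v a := by rw [Finset.sum_insert hv, add_comm]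
        _ ≤ alphaW G (mergeWeight w v) := le_alphaW G _ hind
    · have hright : I.toRight = ∅ := by ext ⟨⟩; simpa using hr
      rw [hright, Finset.sum_empty, add_zero]
      exact hleft.trans (le_alphaW G _ (h.isIndepSet_toLeft hI))
  · refine alphaW_le G _ fun I hI => ?_
    have hlift := le_alphaW G' w (h.isIndepSet_disjSum_empty hI)
    rw [Finset.sum_disjSum, Finset.sum_empty, add_zero] at hlift
    by_cases hv : v ∈ I
    · rw [mergeWeight, Finset.sum_update_of_mem hv, Finset.sdiff_singleton_eq_erase]
      rcases le_total (w (Sum.inr ())) (w (Sum.inl v)) with hq | hp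
      · rw [max_eq_left hq]
        rwa [← Finset.add_sum_erase _ _ hv] at hlift
      · have hswap := le_alphaW G' w (h.isIndepSet_erase_disjSum hI hv)
        rw [max_eq_right hp]
        rwa [Finset.sum_disjSum, Finset.sum_singleton, add_comm] at hswap
    · rwa [mergeWeight, Finset.sum_update_of_notMem hv]

theorem isRealization_mergeRealization [DecidableEq V] (h : IsVertexSplit G v G') {d : ℕ}
    {S : V ⊕ Unit → Matrix (Fin d) (Fin d) ℂ} (hS : IsRealization G' d S) {c s : ℝ}
    (hcs : c ^ 2 + s ^ 2 = 1) : IsRealization G d (mergeRealization S v c s) := by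
  set M := c • S (Sum.inl v) + s • S (Sum.inr ())
  have hself : mergeRealization S v c s v = M := Function.update_self ..
  have hne : ∀ a, a ≠ v → mergeRealization S v c s a = S (Sum.inl a) := fun a ha =>
    Function.update_of_ne ha ..
  have hanti : ∀ a, G.Adj a v → S (Sum.inl a) * M = -(M * S (Sum.inl a)) := fun a hav =>
    hS.mul_smul_add_smul_of_adj ((h.adj_inl_inl a v).mpr hav)
      ((h.adj_inl_inr a).mpr (Or.inr hav)) c s
  have hcomm : ∀ a, a ≠ v → ¬G.Adj a v → Commute (S (Sum.inl a)) M := fun a ha hnadj =>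
    hS.commute_smul_add_smul (by simpa) (by simp) (by rwa [h.adj_inl_inl])
      (by rw [h.adj_inl_inr]; tauto) c s
  refine ⟨fun a => ?_, fun a => ?_, fun a b hab => ?_, fun a b hab hnadj => ?_⟩
  · rcases eq_or_ne a v with rfl | ha
    · rw [hself]
      exact hS.isHermitian_smul_add_smul c s
    · rw [hne a ha]
      exact hS.1 _
  · rcases eq_or_ne a v with rfl | ha
    · rw [hself]
      exact hS.smul_add_smul_mul_self ((h.adj_inl_inr a).mpr (Or.inl rfl)) hcs
    · rw [hne a ha]
      exact hS.2.1 _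
  · rcases eq_or_ne a v with ha | ha <;> rcases eq_or_ne b v with hb | hb
    · exact absurd (ha ▸ hb ▸ hab) G.irrefl
    · rw [ha, hself, hne b hb, hanti b (ha ▸ hab.symm), neg_neg]
    · rw [hb, hself, hne a ha]
      exact hanti a (hb ▸ hab)
    · rw [hne a ha, hne b hb]
      exact hS.2.2.1 _ _ ((h.adj_inl_inl a b).mpr hab)
  · rcases eq_or_ne a v with ha | ha <;> rcases eq_or_ne b v with hb | hb
    · exact absurd (ha.trans hb.symm) hab
    · rw [ha, hself, hne b hb]
      exact (hcomm b hb fun hbv => hnadj (ha ▸ hbv.symm)).symm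
    · rw [hb, hself, hne a ha]
      exact hcomm a ha (hb ▸ hnadj)
    · rw [hne a ha, hne b hb]
      exact hS.2.2.2 _ _ (by simpa) (by rwa [h.adj_inl_inl])

end IsVertexSplit

/-- Splitting a vertex of an ħ-perfect graph yields an ħ-perfect graph: the new vertex is
adjacent to the split vertex and to all of its neighbors. -/
theorem stmt_6 {V : Type*} [Fintype V] (G : SimpleGraph V) (v : V)
    (G' : SimpleGraph (V ⊕ Unit))
    (hll : ∀ a b, G'.Adj (Sum.inl a) (Sum.inl b) ↔ G.Adj a b)
    (hnew : ∀ a, G'.Adj (Sum.inl a) (Sum.inr ()) ↔ (a = v ∨ G.Adj a v))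
    (hG : HbarPerfect G) :
    HbarPerfect G' := by
  classical
  intro d hd S' hS' w' hw'
  have hsplit : IsVertexSplit G v G' := ⟨hll, hnew⟩
  have hw : ∀ a, 0 ≤ mergeWeight w' v a := fun a => (hw' _).trans (le_mergeWeight w' v a)
  have hperfect : ∀ c s : ℝ, c ^ 2 + s ^ 2 = 1 →
      betaVal (mergeRealization S' v c s) (mergeWeight w' v) = alphaW G (mergeWeight w' v) :=
    fun c s hcs => hG d hd _ (hsplit.isRealization_mergeRealization hS' hcs) _ hw
  rw [hsplit.alphaW_eq]
  apply le_antisymm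
  · refine betaVal_le hd fun ψ hψ => ?_
    obtain ⟨c, s, hcs, hle⟩ := exists_sq_add_sq_eq_one_le_max_mul_sq (w' (Sum.inl v))
      (w' (Sum.inr ())) (expectation (S' (Sum.inl v)) ψ) (expectation (S' (Sum.inr ())) ψ)
    have hS := hsplit.isRealization_mergeRealization hS' hcs
    rw [← hperfect c s hcs]
    refine le_trans ?_ (le_betaVal hS.1 hS.2.1 hw hψ)
    rw [sum_sum_unit_eq_sum_compl_add v, sum_mergeWeight_mul_expectation_sq]
    exact add_le_add_right hle _
  · obtain ⟨c, s, hcs, hle⟩ := exists_sq_add_sq_eq_one_max_mul_sq_le (hw' (Sum.inl v))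
      (hw' (Sum.inr ()))
    rw [← hperfect c s hcs]
    refine betaVal_le hd fun ψ hψ => le_trans ?_ (le_betaVal hS'.1 hS'.2.1 hw' hψ)
    rw [sum_sum_unit_eq_sum_compl_add v, sum_mergeWeight_mul_expectation_sq]
    exact add_le_add_right (hle _ _) _
end

section
/- For every finite simple graph H on k labeled vertices with k ≥ 2, there exists a real constant c < 1 such that for every n ≥ k, the number of simple graphs on the labeled vertex set Fin n that contain no induced subgraph isomorphic to H is at most 2^(c · n(n−1)/2). -/
attribute [local instance] Classical.propDecidable

namespace Stmt9Aux

noncomputable section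

abbrev ND (n : ℕ) := {s : Sym2 (Fin n) // ¬ s.IsDiag}

def pat {k : ℕ} (H : SimpleGraph (Fin k)) : ND k → Prop := fun q => q.1 ∈ H.edgeSet

def enc {n : ℕ} (G : SimpleGraph (Fin n)) : ND n → Prop := fun p => p.1 ∈ G.edgeSet

lemma enc_injective {n : ℕ} : Function.Injective (enc (n := n)) := by
  intro G G' h
  ext a b
  by_cases hab : a = b
  · subst hab; simp
  · have := congrFun h ⟨s(a, b), by simp [hab]⟩
    simp only [enc, SimpleGraph.mem_edgeSet] at this
    exact iff_of_eq this

def bmap {k n : ℕ} (f : Fin k ↪ Fin n) : ND k → ND n :=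
  fun q => ⟨q.1.map f, by rw [Sym2.isDiag_map f.injective]; exact q.2⟩

lemma bmap_injective {k n : ℕ} (f : Fin k ↪ Fin n) : Function.Injective (bmap f) :=
  fun q q' h => Subtype.ext (Sym2.map.injective f.injective (Subtype.ext_iff.mp h))

lemma count_le {k n : ℕ} (H : SimpleGraph (Fin k)) {I : Type} [Fintype I]
    (f : I → (Fin k ↪ Fin n))
    (hinj : Function.Injective (fun iq : I × ND k => bmap (f iq.1) iq.2)) :
    k.choose 2 * Fintype.card I ≤ n.choose 2 ∧
    Nat.card {G : SimpleGraph (Fin n) //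
        ¬∃ e : Fin k ↪ Fin n, ∀ a b, G.Adj (e a) (e b) ↔ H.Adj a b} ≤
      (2 ^ k.choose 2 - 1) ^ Fintype.card I *
        2 ^ (n.choose 2 - k.choose 2 * Fintype.card I) := by
  set B : I × ND k → ND n := fun iq => bmap (f iq.1) iq.2 with hB
  have hcardND : ∀ m : ℕ, Fintype.card (ND m) = m.choose 2 := by
    intro m
    rw [Sym2.card_subtype_not_diag, Fintype.card_fin]
  have hKT : k.choose 2 * Fintype.card I ≤ n.choose 2 := by
    have := Fintype.card_le_of_injective B hinj
    rwa [Fintype.card_prod, hcardND, hcardND, mul_comm] at this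
  refine ⟨hKT, ?_⟩
  -- the injection
  have hpsi : ∃ Ψ : {G : SimpleGraph (Fin n) //
      ¬∃ e : Fin k ↪ Fin n, ∀ a b, G.Adj (e a) (e b) ↔ H.Adj a b} →
      ((I → {w : ND k → Prop // w ≠ pat H}) × ({p : ND n // p ∉ Set.range B} → Prop)),
      Function.Injective Ψ := by
    have hne : ∀ (G : SimpleGraph (Fin n)),
        (¬∃ e : Fin k ↪ Fin n, ∀ a b, G.Adj (e a) (e b) ↔ H.Adj a b) →
        ∀ i : I, (fun q => enc G (bmap (f i) q)) ≠ pat H := by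
      intro G hG i hpat
      apply hG
      refine ⟨f i, fun a b => ?_⟩
      by_cases hab : a = b
      · subst hab; simp
      · have := congrFun hpat ⟨s(a, b), by simp [hab]⟩
        simp only [enc, bmap, pat, Sym2.map_pair_eq, SimpleGraph.mem_edgeSet] at this
        exact iff_of_eq this
    refine ⟨fun G => ⟨fun i => ⟨fun q => enc G.1 (bmap (f i) q), hne G.1 G.2 i⟩,
      fun p => enc G.1 p.1⟩, ?_⟩
    intro G G' h
    have h1 := congrArg Prod.fst h
    have h2 := congrArg Prod.snd h
    simp only at h1 h2
    apply Subtype.ext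
    apply enc_injective
    funext p
    by_cases hp : p ∈ Set.range B
    · obtain ⟨⟨i, q⟩, rfl⟩ := hp
      have := congrFun h1 i
      have := congrArg Subtype.val this
      exact congrFun this q
    · exact congrFun h2 ⟨p, hp⟩
  obtain ⟨Ψ, hΨ⟩ := hpsi
  have : Nat.card {G : SimpleGraph (Fin n) //
      ¬∃ e : Fin k ↪ Fin n, ∀ a b, G.Adj (e a) (e b) ↔ H.Adj a b} ≤
      Nat.card ((I → {w : ND k → Prop // w ≠ pat H}) × ({p : ND n // p ∉ Set.range B} → Prop)) :=
    Nat.card_le_card_of_injective Ψ hΨ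
  refine this.trans_eq ?_
  rw [Nat.card_prod, Nat.card_fun, Nat.card_fun]
  have hW : Nat.card {w : ND k → Prop // w ≠ pat H} = 2 ^ k.choose 2 - 1 := by
    rw [Nat.card_eq_fintype_card]
    have h1 : Fintype.card {w : ND k → Prop // w = pat H} = 1 := Fintype.card_subtype_eq _
    have h2 := Fintype.card_subtype_compl (fun w : ND k → Prop => w = pat H)
    rw [h1, Fintype.card_fun, Fintype.card_prop, hcardND] at h2
    convert h2 using 2
  have hR : Nat.card {p : ND n // p ∉ Set.range B} =
      n.choose 2 - k.choose 2 * Fintype.card I := by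
    rw [Nat.card_eq_fintype_card]
    have h2 := Fintype.card_subtype_compl (fun p : ND n => p ∈ Set.range B)
    have h3 : Fintype.card {p : ND n // p ∈ Set.range B} = Fintype.card (I × ND k) :=
      (Fintype.card_congr (Equiv.ofInjective B hinj)).symm
    rw [h3, Fintype.card_prod, hcardND, hcardND, mul_comm] at h2
    convert h2 using 2
  have hProp : Nat.card Prop = 2 := by rw [Nat.card_eq_fintype_card, Fintype.card_prop]
  have hI : Nat.card I = Fintype.card I := Nat.card_eq_fintype_card
  rw [hW, hR, hProp, hI]

lemma g_inj {m : ℕ} (hm : 0 < m) {a b r s : ℕ} (hr : r < m) (hs : s < m)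
    (h : a * m + r = b * m + s) : a = b ∧ r = s := by
  have e1 : (a * m + r) % m = r := by
    rw [add_comm, Nat.add_mul_mod_self_right, Nat.mod_eq_of_lt hr]
  have e2 : (b * m + s) % m = s := by
    rw [add_comm, Nat.add_mul_mod_self_right, Nat.mod_eq_of_lt hs]
  rw [h, e2] at e1
  subst e1
  refine ⟨Nat.eq_of_mul_eq_mul_right hm (by omega), rfl⟩

def FF {k n m : ℕ} (hm : 0 < m) (hmn : k * m ≤ n) (x y : ZMod m) : Fin k ↪ Fin n := by
  haveI : NeZero m := ⟨hm.ne'⟩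
  refine ⟨fun a => ⟨(a : ℕ) * m + (x + ((a : ℕ) : ZMod m) * y).val, ?_⟩, ?_⟩
  · have h1 : (x + ((a : ℕ) : ZMod m) * y).val < m := ZMod.val_lt _
    have h2 : (a : ℕ) + 1 ≤ k := a.isLt
    calc (a : ℕ) * m + (x + ((a : ℕ) : ZMod m) * y).val < ((a : ℕ) + 1) * m := by
          rw [add_one_mul]; omega
      _ ≤ k * m := Nat.mul_le_mul_right m h2
      _ ≤ n := hmn
  · intro a b hab
    haveI : NeZero m := ⟨hm.ne'⟩
    simp only [Fin.mk.injEq] at hab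
    exact Fin.ext (g_inj hm (ZMod.val_lt _) (ZMod.val_lt _) hab).1

lemma FF_val {k n m : ℕ} (hm : 0 < m) (hmn : k * m ≤ n) (x y : ZMod m) (a : Fin k) :
    haveI : NeZero m := ⟨hm.ne'⟩
    (FF hm hmn x y a : ℕ) = (a : ℕ) * m + (x + ((a : ℕ) : ZMod m) * y).val := rfl

lemma solve {m : ℕ} [Fact m.Prime] {α β x y x' y' : ZMod m} (hαβ : α ≠ β)
    (E1 : x + α * y = x' + α * y') (E2 : x + β * y = x' + β * y') : x = x' ∧ y = y' := by
  have h3 : (α - β) * (y - y') = 0 := by linear_combination E1 - E2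
  have hy : y = y' := by
    rcases mul_eq_zero.mp h3 with h | h
    · exact absurd (sub_eq_zero.mp h) hαβ
    · exact sub_eq_zero.mp h
  subst hy
  exact ⟨by linear_combination E1, rfl⟩

lemma big_inj {k n m : ℕ} (hp : m.Prime) (hkm : k ≤ m) (hmn : k * m ≤ n) :
    Function.Injective (fun iq : (ZMod m × ZMod m) × ND k =>
      bmap (FF hp.pos hmn iq.1.1 iq.1.2) iq.2) := by
  haveI : NeZero m := ⟨hp.pos.ne'⟩
  haveI : Fact m.Prime := ⟨hp⟩
  have hcast : ∀ a b : Fin k, a ≠ b → (((a : ℕ) : ZMod m) ≠ ((b : ℕ) : ZMod m)) := by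
    intro a b hab h
    apply hab
    have := congrArg ZMod.val h
    rw [ZMod.val_natCast_of_lt (lt_of_lt_of_le a.isLt hkm),
      ZMod.val_natCast_of_lt (lt_of_lt_of_le b.isLt hkm)] at this
    exact Fin.ext this
  rintro ⟨⟨x, y⟩, s, hs⟩ ⟨⟨x', y'⟩, s', hs'⟩ h
  simp only [bmap, Subtype.mk.injEq] at h
  induction s using Sym2.ind with
  | _ a b =>
  induction s' using Sym2.ind with
  | _ a' b' =>
  have hab : a ≠ b := by simpa using hs
  have hab' : a' ≠ b' := by simpa using hs'
  rw [Sym2.map_pair_eq, Sym2.map_pair_eq, Sym2.eq_iff] at h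
  -- extract component equalities
  have decomp : ∀ (u u' : Fin k), FF hp.pos hmn x y u = FF hp.pos hmn x' y' u' →
      u = u' ∧ x + ((u : ℕ) : ZMod m) * y = x' + ((u : ℕ) : ZMod m) * y' := by
    intro u u' huu
    have hval := congrArg (fun t : Fin n => (t : ℕ)) huu
    simp only [FF_val] at hval
    obtain ⟨h1, h2⟩ := g_inj hp.pos (ZMod.val_lt _) (ZMod.val_lt _) hval
    have hu : u = u' := Fin.ext h1
    subst hu
    exact ⟨rfl, by
      have := ZMod.val_injective m h2
      exact this⟩
  rcases h with ⟨h1, h2⟩ | ⟨h1, h2⟩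
  · obtain ⟨ha, E1⟩ := decomp a a' h1
    obtain ⟨hb, E2⟩ := decomp b b' h2
    subst ha; subst hb
    obtain ⟨hx, hy⟩ := solve (hcast a b hab) E1 E2
    subst hx; subst hy
    rfl
  · obtain ⟨ha, E1⟩ := decomp a b' h1
    obtain ⟨hb, E2⟩ := decomp b a' h2
    subst ha; subst hb
    obtain ⟨hx, hy⟩ := solve (hcast a b hab) E1 E2
    subst hx; subst hy
    simp only [Prod.mk.injEq, Subtype.mk.injEq, true_and]
    exact Sym2.eq_swap

lemma real_est {K N T : ℕ} (hK : 1 ≤ K) (hKT : K * T ≤ N) {c : ℝ}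
    (hc : (1 - c) * N ≤ ((K : ℝ) - Real.logb 2 ((2 : ℝ) ^ K - 1)) * T) :
    (((2 ^ K - 1) ^ T * 2 ^ (N - K * T) : ℕ) : ℝ) ≤ (2 : ℝ) ^ (c * (N : ℝ)) := by
  have hpow : (1 : ℕ) ≤ 2 ^ K := Nat.one_le_two_pow
  have hbase : (0 : ℝ) < (2 : ℝ) ^ K - 1 := by
    have h2 : (2 : ℝ) = 2 ^ 1 := (pow_one 2).symm
    have : (2 : ℝ) ^ 1 ≤ 2 ^ K := pow_le_pow_right₀ (by norm_num) hK
    rw [← h2] at this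
    linarith
  set γ := Real.logb 2 ((2 : ℝ) ^ K - 1) with hγdef
  have hγ : (2 : ℝ) ^ γ = (2 : ℝ) ^ K - 1 := Real.rpow_logb (by norm_num) (by norm_num) hbase
  have key : (((2 ^ K - 1) ^ T * 2 ^ (N - K * T) : ℕ) : ℝ)
      = (2 : ℝ) ^ (γ * T + ((N : ℝ) - (K : ℝ) * T)) := by
    rw [Real.rpow_add (by norm_num)]
    rw [Nat.cast_mul, Nat.cast_pow, Nat.cast_pow, Nat.cast_sub hpow, Nat.cast_pow]
    congr 1
    · have hcst : ((2:ℕ):ℝ) ^ K - ((1:ℕ):ℝ) = (2:ℝ) ^ K - 1 := by push_cast; ring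
      rw [hcst, ← hγ, ← Real.rpow_natCast ((2:ℝ) ^ γ) T, ← Real.rpow_mul (by norm_num)]
    · rw [← Real.rpow_natCast ((2:ℕ):ℝ) (N - K * T), Nat.cast_sub hKT]
      push_cast
      norm_num
  rw [key]
  apply Real.rpow_le_rpow_of_exponent_le (by norm_num)
  linarith

end
end Stmt9Aux

open Stmt9Aux in
/-- For every graph `H` on `k ≥ 2` labeled vertices there is a constant `c < 1` such that the
number of labeled graphs on `Fin n` with no induced subgraph isomorphic to `H` is at most
`2 ^ (c · n(n-1)/2)`. -/
theorem stmt_9 (k : ℕ) (hk : 2 ≤ k) (H : SimpleGraph (Fin k)) :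
    ∃ c : ℝ, c < 1 ∧ ∀ n : ℕ, k ≤ n →
      (Nat.card {G : SimpleGraph (Fin n) //
          ¬∃ f : Fin k ↪ Fin n, ∀ a b, G.Adj (f a) (f b) ↔ H.Adj a b} : ℝ) ≤
        (2 : ℝ) ^ (c * ((n : ℝ) * ((n : ℝ) - 1)) / 2) := by
  classical
  have hk0 : 0 < k := by omega
  set K := k.choose 2 with hKdef
  have hK1 : 1 ≤ K := by
    have : Nat.choose 2 2 ≤ k.choose 2 := Nat.choose_le_choose 2 hk
    simpa using this
  have hbase : (0 : ℝ) < (2 : ℝ) ^ K - 1 := by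
    have h2 : (2 : ℝ) = 2 ^ 1 := (pow_one 2).symm
    have : (2 : ℝ) ^ 1 ≤ 2 ^ K := pow_le_pow_right₀ (by norm_num) hK1
    rw [← h2] at this
    linarith
  set γ := Real.logb 2 ((2 : ℝ) ^ K - 1) with hγdef
  have hγlt : γ < K := by
    have h1 : γ < Real.logb 2 ((2 : ℝ) ^ K) :=
      Real.logb_lt_logb (by norm_num) hbase (by linarith)
    have h2 : Real.logb 2 ((2 : ℝ) ^ K) = K := by
      rw [← Real.rpow_natCast 2 K, Real.logb_rpow (by norm_num) (by norm_num)]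
    rwa [h2] at h1
  set ε := (K : ℝ) - γ with hεdef
  have hεpos : 0 < ε := by simp only [hεdef]; linarith
  set D := (2 * k * (k + 1)) ^ 2 with hDdef
  have hDpos : 0 < D := by positivity
  have hDR : (0 : ℝ) < (D : ℕ) := by exact_mod_cast hDpos
  refine ⟨1 - ε / D, by
    have : 0 < ε / D := div_pos hεpos hDR
    linarith, ?_⟩
  intro n hn
  -- obtain a good family size T with the counting bound
  have main : ∃ T : ℕ, K * T ≤ n.choose 2 ∧ n.choose 2 ≤ D * T ∧
      Nat.card {G : SimpleGraph (Fin n) //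
          ¬∃ f : Fin k ↪ Fin n, ∀ a b, G.Adj (f a) (f b) ↔ H.Adj a b} ≤
        (2 ^ K - 1) ^ T * 2 ^ (n.choose 2 - K * T) := by
    have hchoose_le : n.choose 2 ≤ n * n := by
      rw [Nat.choose_two_right]
      calc n * (n - 1) / 2 ≤ n * (n - 1) := Nat.div_le_self _ _
        _ ≤ n * n := Nat.mul_le_mul_left n (by omega)
    rcases lt_or_ge n (2 * k * (k + 1)) with hsmall | hbig
    · -- small case: one block
      obtain ⟨hKT, hcount⟩ := count_le H (fun _ : PUnit => Fin.castLEEmb hn)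
        (by
          rintro ⟨i, q⟩ ⟨i', q'⟩ h
          have hq := bmap_injective _ h
          cases i; cases i'
          simp only [Prod.mk.injEq]
          exact ⟨trivial, hq⟩)
      refine ⟨1, ?_, ?_, ?_⟩
      · simpa using hKT
      · have : n * n ≤ D := by
          rw [hDdef, pow_two]
          exact Nat.mul_le_mul (by omega) (by omega)
        omega
      · simpa using hcount
    · -- big case: m² blocks, m prime with n/(2k) < m ≤ 2(n/(2k))
      set q := n / (2 * k) with hqdef
      have h2k : 0 < 2 * k := by omega
      have hq1 : k + 1 ≤ q := by
        rw [hqdef]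
        rw [Nat.le_div_iff_mul_le h2k]
        calc (k + 1) * (2 * k) = 2 * k * (k + 1) := by ring
          _ ≤ n := hbig
      obtain ⟨m, hmp, hm1, hm2⟩ := Nat.exists_prime_lt_and_le_two_mul q (by omega)
      have hkm : k ≤ m := by omega
      have h2kq : 2 * k * q ≤ n := by
        rw [hqdef, mul_comm]
        exact Nat.div_mul_le_self n (2 * k)
      have hmn : k * m ≤ n := by
        calc k * m ≤ k * (2 * q) := Nat.mul_le_mul_left k hm2
          _ = 2 * k * q := by ring
          _ ≤ n := h2kq
      have hn2km : n ≤ 2 * k * m := by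
        have h1 : 2 * k * q + n % (2 * k) = n := by rw [hqdef]; exact Nat.div_add_mod n (2 * k)
        have h2 : n % (2 * k) < 2 * k := Nat.mod_lt n h2k
        have h3 : 2 * k * (q + 1) ≤ 2 * k * m := Nat.mul_le_mul_left _ (by omega)
        have h4 : 2 * k * (q + 1) = 2 * k * q + 2 * k := by ring
        linarith
      haveI : NeZero m := ⟨hmp.pos.ne'⟩
      obtain ⟨hKT, hcount⟩ := count_le H
        (fun p : ZMod m × ZMod m => FF hmp.pos hmn p.1 p.2) (big_inj hmp hkm hmn)
      have hcard : Fintype.card (ZMod m × ZMod m) = m * m := by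
        rw [Fintype.card_prod, ZMod.card]
      rw [hcard] at hKT hcount
      refine ⟨m * m, hKT, ?_, hcount⟩
      calc n.choose 2 ≤ n * n := hchoose_le
        _ ≤ (2 * k * m) * (2 * k * m) := Nat.mul_le_mul hn2km hn2km
        _ = ((2 * k) ^ 2) * (m * m) := by ring
        _ ≤ D * (m * m) := by
            apply Nat.mul_le_mul_right
            rw [hDdef]
            calc (2 * k) ^ 2 = (2 * k) ^ 2 * 1 := by ring
              _ ≤ (2 * k) ^ 2 * (k + 1) ^ 2 := Nat.mul_le_mul_left _ (Nat.one_le_pow _ _ (by omega))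
              _ = (2 * k * (k + 1)) ^ 2 := by ring
  obtain ⟨T, hKT, hNT, hcount⟩ := main
  have hcast : (Nat.card {G : SimpleGraph (Fin n) //
      ¬∃ f : Fin k ↪ Fin n, ∀ a b, G.Adj (f a) (f b) ↔ H.Adj a b} : ℝ) ≤
      (((2 ^ K - 1) ^ T * 2 ^ (n.choose 2 - K * T) : ℕ) : ℝ) := by exact_mod_cast hcount
  refine hcast.trans ?_
  have hest := real_est (N := n.choose 2) (T := T) hK1 hKT
    (c := 1 - ε / D) (by
      have h1 : (1 - (1 - ε / D)) * (n.choose 2 : ℝ) = ε / D * (n.choose 2 : ℝ) := by ring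
      rw [h1, ← hγdef, ← hεdef]
      rw [div_mul_eq_mul_div, div_le_iff₀ hDR]
      have h2 : ((n.choose 2 : ℕ) : ℝ) ≤ (D : ℝ) * (T : ℝ) := by exact_mod_cast hNT
      calc ε * (n.choose 2 : ℝ) ≤ ε * ((D : ℝ) * T) := by
            apply mul_le_mul_of_nonneg_left h2 hεpos.le
        _ = ε * T * D := by ring)
  refine hest.trans ?_
  apply le_of_eq
  congr 1
  rw [Nat.cast_choose_two]
  ring
end

section
/- Let G be a simple graph on Fin n and let A ∈ Matrix (Fin n) (Fin n) (ZMod 2) be its adjacency matrix over the field with two elements (A p q = 1 iff p and q are adjacent in G). Call a simple graph T on Fin n a complete tripartite graph (with isolated vertices allowed) if there exist pairwise disjoint sets V_A, V_B, V_C ⊆ Fin n such that two vertices are adjacent in T iff they lie in two distinct sets among V_A, V_B, V_C. Then the minimum natural number t such that there exist complete tripartite graphs T₁, …, T_t on Fin n with A = ∑_{i=1}^t A(T_i) in Matrix (Fin n) (Fin n) (ZMod 2) satisfies 2·t = rank(A), where rank(A) is the rank of A over ZMod 2; in particular the ZMod 2 rank of the adjacency matrix of any simple graph is even. -/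
open scoped Classical in
/-- The adjacency matrix of a simple graph over `ZMod 2`. -/
noncomputable def adjMat2 (n : ℕ) (T : SimpleGraph (Fin n)) :
    Matrix (Fin n) (Fin n) (ZMod 2) :=
  Matrix.of fun p q => if T.Adj p q then 1 else 0

/-- A complete tripartite graph (with isolated vertices allowed): two vertices are adjacent iff
they lie in two distinct sets among three pairwise disjoint parts. -/
def IsCompleteTripartite (n : ℕ) (T : SimpleGraph (Fin n)) : Prop :=
  ∃ A B C : Set (Fin n), Disjoint A B ∧ Disjoint A C ∧ Disjoint B C ∧
    ∀ p q, T.Adj p q ↔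
      ((p ∈ A ∧ q ∈ B) ∨ (p ∈ B ∧ q ∈ A) ∨ (p ∈ A ∧ q ∈ C) ∨ (p ∈ C ∧ q ∈ A) ∨
        (p ∈ B ∧ q ∈ C) ∨ (p ∈ C ∧ q ∈ B))


/-!
Over `ZMod 2` the adjacency matrices of simple graphs are exactly the alternating matrices, and
the complete tripartite graphs are exactly those whose adjacency matrix is a wedge
`u vᵀ - v uᵀ`: the three parts are the fibres of `x ↦ (u x, v x)` over the nonzero vectors of
`(ZMod 2)²`. A wedge has rank at most `2`, so `t` tripartite graphs give rank at most `2t`.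
Conversely, over any field a nonzero alternating matrix with `A p q ≠ 0` loses rank at least `2`
when the wedge of its scaled columns `p` and `q` is subtracted, since this clears both columns;
induction on the rank writes `A` as a sum of at most `rank A / 2` wedges.
-/

open Module Submodule

namespace Matrix

variable {R K ι : Type*}

def wedge [CommRing R] (x y : ι → R) : Matrix ι ι R :=
  vecMulVec x y - vecMulVec y x

structure IsAlt [CommRing R] (A : Matrix ι ι R) : Prop where
  transpose_eq_neg : Aᵀ = -A
  apply_diag : ∀ i, A i i = 0

section CommRing

variable [CommRing R]

theorem wedge_apply (x y : ι → R) (i j : ι) : wedge x y i j = x i * y j - y i * x j := rfl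

theorem wedge_mulVec [Fintype ι] (x y c : ι → R) :
    wedge x y *ᵥ c = (y ⬝ᵥ c) • x - (x ⬝ᵥ c) • y := by
  ext i
  simp [wedge, sub_mulVec, vecMulVec_mulVec, mul_comm]

theorem isAlt_wedge (x y : ι → R) : (wedge x y).IsAlt where
  transpose_eq_neg := by simp [wedge, transpose_vecMulVec]
  apply_diag i := by simp [wedge_apply, mul_comm]

theorem IsAlt.sub {A B : Matrix ι ι R} (hA : A.IsAlt) (hB : B.IsAlt) : (A - B).IsAlt where
  transpose_eq_neg := by
    rw [transpose_sub, hA.transpose_eq_neg, hB.transpose_eq_neg, neg_sub_neg, neg_sub]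
  apply_diag i := by simp [hA.apply_diag, hB.apply_diag]

theorem IsAlt.apply_symm {A : Matrix ι ι R} (hA : A.IsAlt) (i j : ι) : A j i = -A i j :=
  congrFun (congrFun hA.transpose_eq_neg i) j

theorem IsAlt.range_mulVecLin_le_ker_proj [Fintype ι] {A : Matrix ι ι R} (hA : A.IsAlt) {r : ι}
    (hr : ∀ i, A i r = 0) : LinearMap.range A.mulVecLin ≤ LinearMap.ker (LinearMap.proj r) := by
  rintro _ ⟨c, rfl⟩
  exact Finset.sum_eq_zero fun j _ => by simp [hA.apply_symm j r, hr]

end CommRing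

section Field

variable [Field K] [Fintype ι]

theorem range_sum_wedge_le {κ : Type*} [Fintype κ] (x y : κ → ι → K) :
    LinearMap.range (∑ k, wedge (x k) (y k)).mulVecLin ≤ span K (Set.range (Sum.elim x y)) := by
  rintro _ ⟨c, rfl⟩
  rw [mulVecLin_apply, sum_mulVec]
  refine sum_mem fun k _ => ?_
  rw [wedge_mulVec]
  exact sub_mem (smul_mem _ _ (subset_span ⟨.inl k, rfl⟩))
    (smul_mem _ _ (subset_span ⟨.inr k, rfl⟩))

theorem rank_sum_wedge_le {κ : Type*} [Fintype κ] (x y : κ → ι → K) :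
    (∑ k, wedge (x k) (y k)).rank ≤ 2 * Fintype.card κ :=
  calc (∑ k, wedge (x k) (y k)).rank ≤ (Set.range (Sum.elim x y)).finrank K :=
        Submodule.finrank_mono (range_sum_wedge_le x y)
    _ ≤ Fintype.card (κ ⊕ κ) := finrank_range_le_card _
    _ = 2 * Fintype.card κ := by rw [Fintype.card_sum, two_mul]

variable [DecidableEq ι]

theorem IsAlt.exists_rank_sub_wedge_add_two_le {A : Matrix ι ι K} (hA : A.IsAlt) (h0 : A ≠ 0) :
    ∃ x y : ι → K, (A - wedge x y).rank + 2 ≤ A.rank := by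
  obtain ⟨p, q, hpq⟩ : ∃ p q, A p q ≠ 0 := by
    by_contra! h
    exact h0 (ext h)
  set x : ι → K := (A p q)⁻¹ • Aᵀ p
  set y : ι → K := Aᵀ q
  set B := A - wedge x y
  have hxp : x p = 0 := by simp [x, hA.apply_diag]
  have hxq : x q ≠ 0 := by simpa [x, hA.apply_symm q p] using hpq
  have hBp : ∀ i, B i p = 0 := fun i => by
    simp [B, x, y, wedge_apply, hA.apply_diag]
    field_simp
    ring
  have hBq : ∀ i, B i q = 0 := fun i => by
    have hqp : A q p ≠ 0 := by simpa [hA.apply_symm q p] using hpq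
    simp [B, x, y, wedge_apply, hA.apply_diag, hA.apply_symm q p, hqp]
  have hB : B.IsAlt := hA.sub (isAlt_wedge x y)
  have hcol : ∀ r, Aᵀ r ∈ LinearMap.range A.mulVecLin :=
    fun r => ⟨Pi.single r 1, mulVec_single_one A r⟩
  have hBA : LinearMap.range B.mulVecLin ≤ LinearMap.range A.mulVecLin := by
    rintro _ ⟨c, rfl⟩
    rw [mulVecLin_apply, sub_mulVec, wedge_mulVec]
    exact sub_mem ⟨c, rfl⟩
      (sub_mem (smul_mem _ _ (smul_mem _ _ (hcol p))) (smul_mem _ _ (hcol q)))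
  have h1 : LinearMap.range B.mulVecLin < LinearMap.range B.mulVecLin ⊔ span K {x} :=
    SetLike.lt_iff_le_and_exists.2 ⟨le_sup_left, x, mem_sup_right (mem_span_singleton_self x),
      fun hx => hxq (hB.range_mulVecLin_le_ker_proj hBq hx)⟩
  have h2 : LinearMap.range B.mulVecLin ⊔ span K {x} < LinearMap.range A.mulVecLin := by
    refine SetLike.lt_iff_le_and_exists.2 ⟨?_, y, hcol q, fun hy => hpq ?_⟩
    · exact sup_le hBA ((span_singleton_le_iff_mem _ _).2 (smul_mem _ _ (hcol p)))
    · exact sup_le (hB.range_mulVecLin_le_ker_proj hBp) ((span_singleton_le_iff_mem _ _).2 hxp) hy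
  have := Submodule.finrank_lt_finrank_of_lt h1
  have := Submodule.finrank_lt_finrank_of_lt h2
  exact ⟨x, y, show B.rank + 2 ≤ A.rank by unfold rank; omega⟩

theorem IsAlt.exists_eq_sum_wedge {A : Matrix ι ι K} (hA : A.IsAlt) :
    ∃ (k : ℕ) (x y : Fin k → ι → K),
      A = ∑ i, wedge (x i) (y i) ∧ 2 * k ≤ A.rank := by
  induction h : A.rank using Nat.strong_induction_on generalizing A with
  | _ r ih =>
  by_cases h0 : A = 0
  · exact ⟨0, ![], ![], by simp [h0], by omega⟩
  obtain ⟨x, y, hxy⟩ := hA.exists_rank_sub_wedge_add_two_le h0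
  obtain ⟨k, x', y', hsum, hk⟩ := ih _ (by omega) (hA.sub (isAlt_wedge x y)) rfl
  refine ⟨k + 1, Fin.cons x x', Fin.cons y y', ?_, by omega⟩
  rw [Fin.sum_univ_succ, Fin.cons_zero, Fin.cons_zero]
  simp only [Fin.cons_succ]
  rw [← hsum, add_sub_cancel]

end Field

section ZModTwo

theorem IsAlt.isAdjMatrix {M : Matrix ι ι (ZMod 2)} (hM : M.IsAlt) : M.IsAdjMatrix where
  zero_or_one i j := by generalize M i j = a; revert a; decide
  symm := by
    rw [IsSymm, hM.transpose_eq_neg]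
    ext i j
    exact ZMod.neg_eq_self_mod_two _
  apply_diag := hM.apply_diag

def wedgePart (u v : ι → ZMod 2) (a b : ZMod 2) : Set ι := {x | u x = a ∧ v x = b}

-- `u p * v q - v p * u q` is the determinant of `(u p, v p)` and `(u q, v q)` in `(ZMod 2)²`,
-- which is `1` exactly when these two vectors are nonzero and distinct.
theorem wedge_eq_one_iff (u v : ι → ZMod 2) (p q : ι) :
    wedge u v p q = 1 ↔
      (p ∈ wedgePart u v 1 1 ∧ q ∈ wedgePart u v 1 0) ∨
      (p ∈ wedgePart u v 1 0 ∧ q ∈ wedgePart u v 1 1) ∨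
      (p ∈ wedgePart u v 1 1 ∧ q ∈ wedgePart u v 0 1) ∨
      (p ∈ wedgePart u v 0 1 ∧ q ∈ wedgePart u v 1 1) ∨
      (p ∈ wedgePart u v 1 0 ∧ q ∈ wedgePart u v 0 1) ∨
      (p ∈ wedgePart u v 0 1 ∧ q ∈ wedgePart u v 1 0) := by
  simp only [wedge_apply, wedgePart, Set.mem_ofPred_eq]
  generalize u p = a, v p = b, u q = c, v q = d
  revert a b c d
  decide

end ZModTwo

end Matrix

open Matrix

theorem isAlt_adjMat2 (n : ℕ) (T : SimpleGraph (Fin n)) : (adjMat2 n T).IsAlt where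
  transpose_eq_neg := by
    ext p q
    classical
    simpa [adjMat2, CharTwo.neg_eq] using if_congr (T.adj_comm q p) rfl rfl
  apply_diag p := by simp [adjMat2]

theorem adjMat2_eq_iff {n : ℕ} {T : SimpleGraph (Fin n)} {M : Matrix (Fin n) (Fin n) (ZMod 2)} :
    adjMat2 n T = M ↔ ∀ p q, T.Adj p q ↔ M p q = 1 := by
  refine ⟨fun h p q => by simp [← h, adjMat2], fun h => ext fun p q => ?_⟩
  rw [adjMat2, of_apply]
  split_ifs with hpq
  · exact ((h p q).1 hpq).symm
  · have : M p q ≠ 1 := fun h' => hpq ((h p q).2 h')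
    generalize M p q = a at this ⊢
    revert a
    decide

theorem adjMat2_toGraph {n : ℕ} {M : Matrix (Fin n) (Fin n) (ZMod 2)} (hM : M.IsAdjMatrix) :
    adjMat2 n hM.toGraph = M :=
  adjMat2_eq_iff.2 fun _ _ => Iff.rfl

theorem isCompleteTripartite_iff_exists_wedge {n : ℕ} {T : SimpleGraph (Fin n)} :
    IsCompleteTripartite n T ↔ ∃ u v : Fin n → ZMod 2, adjMat2 n T = wedge u v := by
  simp only [adjMat2_eq_iff, wedge_eq_one_iff]
  constructor
  · rintro ⟨PA, PB, PC, hAB, hAC, hBC, hadj⟩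
    classical
    set u : Fin n → ZMod 2 := fun x => if x ∈ PA ∪ PB then 1 else 0
    set v : Fin n → ZMod 2 := fun x => if x ∈ PA ∪ PC then 1 else 0
    have hparts : wedgePart u v 1 1 = PA ∧ wedgePart u v 1 0 = PB ∧ wedgePart u v 0 1 = PC := by
      rw [Set.disjoint_left] at hAB hAC hBC
      refine ⟨?_, ?_, ?_⟩ <;> ext x <;>
        by_cases x ∈ PA <;> by_cases x ∈ PB <;> by_cases x ∈ PC <;> simp_all [wedgePart, u, v]
    obtain ⟨hA, hB, hC⟩ := hparts
    exact ⟨u, v, by rwa [hA, hB, hC]⟩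
  · rintro ⟨u, v, hadj⟩
    refine ⟨wedgePart u v 1 1, wedgePart u v 1 0, wedgePart u v 0 1, ?_, ?_, ?_, hadj⟩ <;>
      · rw [Set.disjoint_left]
        rintro x ⟨hu, hv⟩ ⟨hu', hv'⟩
        simp_all

theorem rank_sum_adjMat2_le {n t : ℕ} (T : Fin t → SimpleGraph (Fin n))
    (hT : ∀ i, IsCompleteTripartite n (T i)) : (∑ i, adjMat2 n (T i)).rank ≤ 2 * t := by
  choose u v huv using fun i => isCompleteTripartite_iff_exists_wedge.1 (hT i)
  simpa [huv] using rank_sum_wedge_le u v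

/-- The minimum number `t` of complete tripartite graphs whose adjacency matrices sum (over
`ZMod 2`) to the adjacency matrix `A` of a graph `G` satisfies `2t = rank A`; in particular the
`ZMod 2` rank of any adjacency matrix is even. -/
theorem stmt_11 (n : ℕ) (G : SimpleGraph (Fin n)) [DecidableRel G.Adj]
    (A : Matrix (Fin n) (Fin n) (ZMod 2))
    (hA : ∀ p q, A p q = if G.Adj p q then 1 else 0) :
    2 * sInf {t : ℕ | ∃ T : Fin t → SimpleGraph (Fin n),
        (∀ i, IsCompleteTripartite n (T i)) ∧ A = ∑ i, adjMat2 n (T i)} = A.rank ∧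
      Even A.rank := by
  set S := {t : ℕ | ∃ T : Fin t → SimpleGraph (Fin n),
    (∀ i, IsCompleteTripartite n (T i)) ∧ A = ∑ i, adjMat2 n (T i)}
  have hrank : ∀ t ∈ S, A.rank ≤ 2 * t := by
    rintro t ⟨T, hT, rfl⟩
    exact rank_sum_adjMat2_le T hT
  have hAG : A = adjMat2 n G := ext fun p q => by simp [hA, adjMat2]
  obtain ⟨k, x, y, hsum, hk⟩ := (hAG ▸ isAlt_adjMat2 n G).exists_eq_sum_wedge
  have hkS : k ∈ S :=
    ⟨fun i => (isAlt_wedge (x i) (y i)).isAdjMatrix.toGraph,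
      fun i => isCompleteTripartite_iff_exists_wedge.2 ⟨x i, y i, adjMat2_toGraph _⟩,
      by simp only [adjMat2_toGraph, hsum]⟩
  have hk' : A.rank = 2 * k := le_antisymm (hrank k hkS) hk
  rw [IsLeast.csInf_eq ⟨hkS, fun t ht => by have := hrank t ht; omega⟩, hk']
  exact ⟨rfl, even_two_mul k⟩
end
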